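/- arXiv:0707.0173 — 7 statements merged into one kernel-verified Lean document; each statement's English description precedes it below -/
import Mathlib

section
/- Let R be a ring and σ an injective endomorphism of R. Suppose there exists n ≥ 1 such that the restriction of σ^n to the center Z(R) is an automorphism of Z(R). Then the restriction of σ to Z(R) is an automorphism of Z(R). -/
/-- If `σ` is an injective endomorphism of a ring `R` and for some `n ≥ 1`
the `n`-th iterate of `σ` restricts to an automorphism (a bijection preserving the
structure) of the center `Z(R)`, then `σ` itself restricts to an automorphism of `Z(R)`. -/
theorem sigma_restricts_to_automorphism_of_center
    {R : Type*} [Ring R] (σ : R →+* R) (hσ : Function.Injective σ)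
    (n : ℕ) (hn : 1 ≤ n)
    (h : Set.BijOn (⇑σ)^[n] (Subring.center R : Set R) (Subring.center R : Set R)) :
    Set.BijOn σ (Subring.center R : Set R) (Subring.center R : Set R) := by
  obtain ⟨m, rfl⟩ : ∃ m, n = m + 1 := ⟨n - 1, (Nat.succ_pred_eq_of_pos hn).symm⟩
  have hmaps : Set.MapsTo σ (Subring.center R : Set R) (Subring.center R : Set R) := by
    intro z hz
    rw [SetLike.mem_coe, Subring.mem_center_iff]
    intro x
    have hf : Function.Injective (⇑σ)^[m] := Function.Injective.iterate hσ m
    apply hf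
    have hc : (⇑σ)^[m + 1] z ∈ Subring.center R := h.mapsTo hz
    have e1 : (⇑σ)^[m] (x * σ z) = (⇑σ)^[m] x * (⇑σ)^[m + 1] z := by
      rw [iterate_map_mul, ← Function.iterate_succ_apply]
    have e2 : (⇑σ)^[m] (σ z * x) = (⇑σ)^[m + 1] z * (⇑σ)^[m] x := by
      rw [iterate_map_mul, ← Function.iterate_succ_apply]
    rw [e1, e2, (Subring.mem_center_iff.mp hc) ((⇑σ)^[m] x)]
  have hiter : ∀ k, Set.MapsTo (⇑σ)^[k] (Subring.center R : Set R)
      (Subring.center R : Set R) := by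
    intro k
    induction k with
    | zero => simpa using Set.mapsTo_id _
    | succ k ih =>
      intro z hz
      rw [Function.iterate_succ_apply']
      exact hmaps (ih hz)
  refine ⟨hmaps, fun a _ b _ hab => hσ hab, ?_⟩
  intro y hy
  obtain ⟨w, hw, hwy⟩ := h.surjOn hy
  refine ⟨(⇑σ)^[m] w, hiter m hw, ?_⟩
  rw [← hwy, Function.iterate_succ_apply']
end

section
/- Let φ be either an automorphism or a derivation of a ring R, and let Z denote the center of R[x;φ]. Then the uniform dimension of R as a right module over the constant subring R^φ is at most the uniform dimension of R[x;φ] as a right Z-module. -/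
/-- `δ` is a `σ`-derivation of `R`. -/
def IsSigmaDerivation {R : Type*} [Ring R] (σ : R →+* R) (δ : R → R) : Prop :=
  (∀ a b : R, δ (a + b) = δ a + δ b) ∧ ∀ a b : R, δ (a * b) = σ a * δ b + δ a * b

/-- `S`, together with the embedding `ι : R →+* S` and the element `x : S`, is
the Ore extension `R[x;σ,δ]`: the relation `x·a = σ(a)·x + δ(a)` holds and every
element of `S` is uniquely a polynomial `Σ aᵢ xⁱ` with coefficients in `R`. -/
structure IsOreExtension {R S : Type*} [Ring R] [Ring S] (σ : R →+* R) (δ : R → R)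
    (ι : R →+* S) (x : S) : Prop where
  inj : Function.Injective ι
  rel : ∀ a : R, x * ι a = ι (σ a) * x + ι (δ a)
  repr : ∀ s : S, ∃ c : ℕ →₀ R, s = c.sum fun i a => ι a * x ^ i
  unique : ∀ c : ℕ →₀ R, (c.sum fun i a => ι a * x ^ i) = 0 → c = 0

/-- Uniform (Goldie) dimension of a module: the supremum of the number of terms in
a direct (independent) family of nonzero submodules. -/
noncomputable def uniformDim (R M : Type*) [Ring R] [AddCommGroup M] [Module R M] : ℕ∞ :=
  ⨆ (n : ℕ) (_ : ∃ f : Fin n → Submodule R M,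
      (∀ i, f i ≠ ⊥) ∧ iSupIndep f), (n : ℕ∞)

section
variable {R S : Type*} [Ring R] [Ring S] (ι : R →+* S) (x : S)

noncomputable def rf (c : ℕ →₀ R) : S := c.sum fun i a => ι a * x ^ i
noncomputable def lf (c : ℕ →₀ R) : S := c.sum fun i a => x ^ i * ι a

lemma rf_zero : rf ι x 0 = 0 := Finsupp.sum_zero_index
lemma lf_zero : lf ι x 0 = 0 := Finsupp.sum_zero_index

lemma rf_add (c d : ℕ →₀ R) : rf ι x (c + d) = rf ι x c + rf ι x d :=
  Finsupp.sum_add_index' (by simp) (by intros; simp [map_add, add_mul])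

lemma lf_add (c d : ℕ →₀ R) : lf ι x (c + d) = lf ι x c + lf ι x d :=
  Finsupp.sum_add_index' (by simp) (by intros; simp [map_add, mul_add])

lemma rf_sub (c d : ℕ →₀ R) : rf ι x (c - d) = rf ι x c - rf ι x d :=
  Finsupp.sum_sub_index (by intros; simp [map_sub, sub_mul])

lemma lf_sub (c d : ℕ →₀ R) : lf ι x (c - d) = lf ι x c - lf ι x d :=
  Finsupp.sum_sub_index (by intros; simp [map_sub, mul_sub])

lemma rf_sum {A : Type*} (t : Finset A) (g : A → (ℕ →₀ R)) :
    rf ι x (∑ j ∈ t, g j) = ∑ j ∈ t, rf ι x (g j) := by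
  classical
  induction t using Finset.cons_induction with
  | empty => simp [rf_zero]
  | cons a t ha ih => rw [Finset.sum_cons, Finset.sum_cons, rf_add, ih]
end

section
variable {R S : Type*} [Ring R] [Ring S] (σ : R →+* R) (δ : R → R) (ι : R →+* S) (x : S)

lemma rf_injective (hS : IsOreExtension σ δ ι x) : Function.Injective (rf ι x) := by
  intro c d h
  have h0 : rf ι x (c - d) = 0 := by rw [rf_sub, h, sub_self]
  have := hS.unique (c - d) h0
  exact sub_eq_zero.mp this

lemma mul_x_rf (hS : IsOreExtension σ δ ι x) (hδ0 : δ 0 = 0) (c : ℕ →₀ R) :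
    x * rf ι x c =
      rf ι x (Finsupp.mapDomain (· + 1) (c.mapRange σ (map_zero σ)) + c.mapRange δ hδ0) := by
  rw [rf_add]
  have h1 : rf ι x (Finsupp.mapDomain (· + 1) (c.mapRange σ (map_zero σ)))
      = c.sum fun i a => ι (σ a) * x ^ (i + 1) := by
    rw [rf, Finsupp.sum_mapDomain_index (by simp) (by intros; simp [map_add, add_mul])]
    rw [Finsupp.sum_mapRange_index (by simp)]
  have h2 : rf ι x (c.mapRange δ hδ0) = c.sum fun i a => ι (δ a) * x ^ i := by
    rw [rf, Finsupp.sum_mapRange_index (by simp [hδ0])]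
  rw [h1, h2, rf, Finsupp.mul_sum, ← Finsupp.sum_add]
  refine Finsupp.sum_congr fun i _ => ?_
  rw [← mul_assoc, hS.rel, add_mul, mul_assoc, ← pow_succ']

lemma rf_mul_x (c : ℕ →₀ R) :
    rf ι x c * x = rf ι x (Finsupp.mapDomain (· + 1) c) := by
  rw [rf, rf, Finsupp.sum_mapDomain_index (by simp) (by intros; simp [map_add, add_mul]),
    Finsupp.sum_mul]
  refine Finsupp.sum_congr fun i _ => ?_
  rw [mul_assoc, ← pow_succ]

lemma lemD (hS : IsOreExtension σ δ ι x) (hδ0 : δ 0 = 0) (j : ℕ) (a : R) :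
    ∃ c : ℕ →₀ R, x ^ j * ι a = rf ι x c ∧ c j = (⇑σ)^[j] a ∧ ∀ m, j < m → c m = 0 := by
  induction j with
  | zero =>
    refine ⟨Finsupp.single 0 a, ?_, by simp, ?_⟩
    · rw [rf, Finsupp.sum_single_index (by simp)]; simp
    · intro m hm; rw [Finsupp.single_apply, if_neg (by omega)]
  | succ j ih =>
    obtain ⟨c, hc, htop, hhigh⟩ := ih
    refine ⟨Finsupp.mapDomain (· + 1) (c.mapRange σ (map_zero σ)) + c.mapRange δ hδ0,
      ?_, ?_, ?_⟩
    · rw [pow_succ', mul_assoc, hc, mul_x_rf σ δ ι x hS hδ0]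
    · rw [Finsupp.add_apply, Finsupp.mapRange_apply, hhigh (j + 1) (by omega), hδ0,
        add_zero, Finsupp.mapDomain_apply (add_left_injective 1), Finsupp.mapRange_apply,
        htop, Function.iterate_succ_apply']
    · intro m hm
      obtain ⟨k, rfl⟩ : ∃ k, m = k + 1 := ⟨m - 1, by omega⟩
      rw [Finsupp.add_apply, Finsupp.mapRange_apply, hhigh (k + 1) (by omega), hδ0,
        add_zero, Finsupp.mapDomain_apply (add_left_injective 1), Finsupp.mapRange_apply,
        hhigh k (by omega), map_zero]

end

section
variable {R S : Type*} [Ring R] [Ring S] (σ : R →+* R) (δ : R → R) (ι : R →+* S) (x : S)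

lemma lf_eq_zero (hS : IsOreExtension σ δ ι x) (hδ0 : δ 0 = 0)
    (hσinj : Function.Injective σ) (b : ℕ →₀ R) (h : lf ι x b = 0) : b = 0 := by
  classical
  by_contra hb
  set n := b.support.max' (Finsupp.support_nonempty_iff.mpr hb) with hn
  choose g hg1 hg2 hg3 using lemD σ δ ι x hS hδ0
  have hlf : lf ι x b = rf ι x (∑ j ∈ b.support, g j (b j)) := by
    rw [rf_sum, lf, Finsupp.sum]
    exact Finset.sum_congr rfl fun j _ => hg1 j (b j)
  have hzero : (∑ j ∈ b.support, g j (b j)) = 0 :=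
    rf_injective σ δ ι x hS (by rw [← hlf, h, rf_zero])
  have hnmem : n ∈ b.support := b.support.max'_mem _
  have hev : (∑ j ∈ b.support, g j (b j)) n = (⇑σ)^[n] (b n) := by
    rw [Finset.sum_apply']
    rw [Finset.sum_eq_single_of_mem n hnmem]
    · exact hg2 n (b n)
    · intro j hj hne
      exact hg3 j (b j) n (lt_of_le_of_ne (b.support.le_max' j hj) hne)
  rw [hzero] at hev
  have : b n = 0 := (hσinj.iterate n) (by rw [← hev]; simp)
  exact (Finsupp.mem_support_iff.mp hnmem) this

lemma lf_injective (hS : IsOreExtension σ δ ι x) (hδ0 : δ 0 = 0)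
    (hσinj : Function.Injective σ) : Function.Injective (lf ι x) := by
  intro c d h
  have h0 : lf ι x (c - d) = 0 := by rw [lf_sub, h, sub_self]
  exact sub_eq_zero.mp (lf_eq_zero σ δ ι x hS hδ0 hσinj _ h0)

lemma center_coeff
    (hφ : (Function.Bijective σ ∧ δ = fun _ => 0) ∨
      (σ = RingHom.id R ∧ IsSigmaDerivation (RingHom.id R) δ))
    (hS : IsOreExtension σ δ ι x) (hδ0 : δ 0 = 0)
    (z : S) (hz : z ∈ Subring.center S) :
    ∃ c : ℕ →₀ R, (∀ l, σ (c l) = c l ∧ δ (c l) = 0) ∧ z = rf ι x c := by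
  obtain ⟨c, hc⟩ := hS.repr z
  have hc' : z = rf ι x c := hc
  refine ⟨c, fun l => ?_, hc'⟩
  have hcomm : x * z = z * x := Subring.mem_center_iff.mp hz x
  rw [hc', mul_x_rf σ δ ι x hS hδ0, rf_mul_x] at hcomm
  have heq := rf_injective σ δ ι x hS hcomm
  have key0 : δ (c 0) = 0 := by
    have := DFunLike.congr_fun heq 0
    simp only [Finsupp.add_apply, Finsupp.coe_add] at this
    rw [Finsupp.mapDomain_notin_range _ _ (by simp), Finsupp.mapDomain_notin_range _ _ (by simp),
      Finsupp.mapRange_apply] at this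
    simpa using this
  have keyl : ∀ m, σ (c m) + δ (c (m + 1)) = c m := by
    intro m
    have := DFunLike.congr_fun heq (m + 1)
    simp only [Finsupp.coe_add, Pi.add_apply] at this
    rwa [Finsupp.mapDomain_apply (add_left_injective 1), Finsupp.mapRange_apply,
      Finsupp.mapDomain_apply (add_left_injective 1), Finsupp.mapRange_apply] at this
  rcases hφ with ⟨hbij, hδ⟩ | ⟨hσ, hder⟩
  · subst hδ
    refine ⟨?_, rfl⟩
    have := keyl l; simpa using this
  · have hσl : ∀ r, σ r = r := fun r => by rw [hσ]; rfl
    refine ⟨hσl _, ?_⟩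
    cases l with
    | zero => exact key0
    | succ m =>
      have := keyl m
      rw [hσl] at this
      exact add_eq_left.mp this
end

section
variable {R S : Type*} [Ring R] [Ring S] (σ : R →+* R) (δ : R → R) (ι : R →+* S) (x : S)
  (C : Subring R)

lemma hδ0_of (hφ : (Function.Bijective σ ∧ δ = fun _ => 0) ∨
      (σ = RingHom.id R ∧ IsSigmaDerivation (RingHom.id R) δ)) : δ 0 = 0 := by
  rcases hφ with ⟨_, hδ⟩ | ⟨_, hder⟩
  · rw [hδ]
  · have := hder.1 0 0
    simpa using this.symm

lemma hσinj_of (hφ : (Function.Bijective σ ∧ δ = fun _ => 0) ∨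
      (σ = RingHom.id R ∧ IsSigmaDerivation (RingHom.id R) δ)) :
    Function.Injective σ := by
  rcases hφ with ⟨hbij, _⟩ | ⟨hσ, _⟩
  · exact hbij.1
  · rw [hσ]; exact fun a b h => h

def liftSet (N : Submodule C R) : Set S :=
  {s | ∃ b : ℕ →₀ R, (∀ j, b j ∈ N) ∧ s = lf ι x b}

lemma liftSet_zero (N : Submodule C R) : (0 : S) ∈ liftSet ι x C N :=
  ⟨0, by simp, (lf_zero ι x).symm⟩

lemma liftSet_add {N : Submodule C R} {s t : S} (hs : s ∈ liftSet ι x C N)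
    (ht : t ∈ liftSet ι x C N) : s + t ∈ liftSet ι x C N := by
  obtain ⟨b, hb, rfl⟩ := hs
  obtain ⟨b', hb', rfl⟩ := ht
  exact ⟨b + b', fun j => by rw [Finsupp.add_apply]; exact add_mem (hb j) (hb' j),
    (lf_add ι x b b').symm⟩

lemma liftSet_sum {N : Submodule C R} {A : Type*} (t : Finset A) (g : A → S)
    (h : ∀ j ∈ t, g j ∈ liftSet ι x C N) : (∑ j ∈ t, g j) ∈ liftSet ι x C N := by
  classical
  induction t using Finset.cons_induction with
  | empty => simpa using liftSet_zero ι x C N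
  | cons a t ha ih =>
    rw [Finset.sum_cons]
    exact liftSet_add ι x C (h a (Finset.mem_cons_self a t))
      (ih fun j hj => h j (Finset.mem_cons_of_mem hj))

lemma liftSet_x_mul {N : Submodule C R} {s : S} (hs : s ∈ liftSet ι x C N) :
    x * s ∈ liftSet ι x C N := by
  obtain ⟨b, hb, rfl⟩ := hs
  refine ⟨Finsupp.mapDomain (· + 1) b, fun j => ?_, ?_⟩
  · cases j with
    | zero => rw [Finsupp.mapDomain_notin_range _ _ (by simp)]; exact zero_mem N
    | succ k => rw [Finsupp.mapDomain_apply (add_left_injective 1)]; exact hb k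
  · rw [lf, lf, Finsupp.sum_mapDomain_index (by simp) (by intros; simp [map_add, mul_add]),
      Finsupp.mul_sum]
    refine Finsupp.sum_congr fun i _ => ?_
    rw [← mul_assoc, ← pow_succ']

lemma liftSet_pow_mul {N : Submodule C R} {s : S} (hs : s ∈ liftSet ι x C N) (l : ℕ) :
    x ^ l * s ∈ liftSet ι x C N := by
  induction l with
  | zero => simpa using hs
  | succ k ih =>
    have := liftSet_x_mul ι x C ih
    rwa [← mul_assoc, ← pow_succ'] at this

lemma liftSet_const_mul (hS : IsOreExtension σ δ ι x)
    (hC : ∀ r : R, r ∈ C ↔ (σ r = r ∧ δ r = 0))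
    {N : Submodule C R} {d : R} (hd : d ∈ C) {s : S} (hs : s ∈ liftSet ι x C N) :
    ι d * s ∈ liftSet ι x C N := by
  obtain ⟨hd1, hd2⟩ := (hC d).mp hd
  have hxd : Commute x (ι d) := by
    show x * ι d = ι d * x
    rw [hS.rel, hd1, hd2, map_zero, add_zero]
  obtain ⟨b, hb, rfl⟩ := hs
  refine ⟨b.mapRange (d * ·) (mul_zero d), fun j => ?_, ?_⟩
  · rw [Finsupp.mapRange_apply]
    have := N.smul_mem (⟨d, hd⟩ : C) (hb j)
    simpa [Subring.smul_def, smul_eq_mul] using this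
  · rw [lf, lf, Finsupp.sum_mapRange_index (by simp), Finsupp.mul_sum]
    refine Finsupp.sum_congr fun i _ => ?_
    rw [← mul_assoc, ← (hxd.pow_left i).eq, mul_assoc, ← map_mul]

noncomputable def liftSub
    (hφ : (Function.Bijective σ ∧ δ = fun _ => 0) ∨
      (σ = RingHom.id R ∧ IsSigmaDerivation (RingHom.id R) δ))
    (hS : IsOreExtension σ δ ι x)
    (hC : ∀ r : R, r ∈ C ↔ (σ r = r ∧ δ r = 0))
    (N : Submodule C R) : Submodule (Subring.center S) S where
  carrier := liftSet ι x C N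
  zero_mem' := liftSet_zero ι x C N
  add_mem' := liftSet_add ι x C
  smul_mem' := by
    intro z s hs
    obtain ⟨c, hc, hzr⟩ := center_coeff σ δ ι x hφ hS (hδ0_of σ δ hφ) (z : S) z.2
    have hzs : z • s = (z : S) * s := rfl
    rw [hzs, hzr, rf, Finsupp.sum_mul]
    refine liftSet_sum ι x C _ _ fun l _ => ?_
    show ι (c l) * x ^ l * s ∈ liftSet ι x C N
    rw [mul_assoc]
    exact liftSet_const_mul σ δ ι x C hS hC ((hC _).mpr (hc l))
      (liftSet_pow_mul ι x C hs l)
end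

section
variable {R S : Type*} [Ring R] [Ring S] (σ : R →+* R) (δ : R → R) (ι : R →+* S) (x : S)
  (C : Subring R)
  (hφ : (Function.Bijective σ ∧ δ = fun _ => 0) ∨
      (σ = RingHom.id R ∧ IsSigmaDerivation (RingHom.id R) δ))
  (hS : IsOreExtension σ δ ι x)
  (hC : ∀ r : R, r ∈ C ↔ (σ r = r ∧ δ r = 0))

lemma mem_liftSub {N : Submodule C R} {s : S} :
    s ∈ liftSub σ δ ι x C hφ hS hC N ↔ s ∈ liftSet ι x C N := Iff.rfl

lemma liftSub_mono {N N' : Submodule C R} (h : N ≤ N') :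
    liftSub σ δ ι x C hφ hS hC N ≤ liftSub σ δ ι x C hφ hS hC N' := by
  intro s hs
  obtain ⟨b, hb, rfl⟩ := hs
  exact ⟨b, fun j => h (hb j), rfl⟩

lemma liftSub_ne_bot {N : Submodule C R} (h : N ≠ ⊥) :
    liftSub σ δ ι x C hφ hS hC N ≠ ⊥ := by
  obtain ⟨a, ha, ha0⟩ := (Submodule.ne_bot_iff N).mp h
  refine (Submodule.ne_bot_iff _).mpr ⟨ι a, ?_, fun h0 => ha0 (hS.inj (by rw [h0, map_zero]))⟩
  refine ⟨Finsupp.single 0 a, fun j => ?_, ?_⟩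
  · rw [Finsupp.single_apply]
    split
    · exact ha
    · exact zero_mem N
  · rw [lf, Finsupp.sum_single_index (by simp)]
    simp

lemma liftSub_indep {n : ℕ} {g : Fin n → Submodule C R} (hg : iSupIndep g) :
    iSupIndep fun i => liftSub σ δ ι x C hφ hS hC (g i) := by
  rw [iSupIndep_def]
  intro i
  rw [Submodule.disjoint_def]
  intro s hsi hsup
  have hle : (⨆ (j) (_ : j ≠ i), liftSub σ δ ι x C hφ hS hC (g j)) ≤
      liftSub σ δ ι x C hφ hS hC (⨆ (j) (_ : j ≠ i), g j) :=
    iSup₂_le fun j hj => liftSub_mono σ δ ι x C hφ hS hC (le_iSup₂ (f := fun j _ => g j) j hj)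
  obtain ⟨b, hb, rfl⟩ := hsi
  obtain ⟨b', hb', he⟩ := hle hsup
  have hbb : b = b' := lf_injective σ δ ι x hS (hδ0_of σ δ hφ) (hσinj_of σ δ hφ) he
  have hdisj := (iSupIndep_def.mp hg) i
  have hb0 : b = 0 := Finsupp.ext fun j =>
    Submodule.disjoint_def.mp hdisj (b j) (hb j) (hbb ▸ hb' j)
  rw [hb0, lf_zero]

end


/-- Let `φ` be either an automorphism or a derivation of a ring `R`, and let
`Z` be the center of `R[x;φ]` (realized as the Ore extension `R[x;σ,δ]` with `δ = 0` and
`σ = φ` bijective in the automorphism case, resp. `σ = id` and `δ = φ` a derivation in the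
derivation case).  Then `udim R_{R^φ} ≤ udim R[x;φ]_Z`, where `R^φ = {r | σ r = r, δ r = 0}`
is the constant subring. -/
theorem uniformDim_constants_le_uniformDim_center
    {R S : Type*} [Ring R] [Ring S]
    (σ : R →+* R) (δ : R → R)
    (hφ : (Function.Bijective σ ∧ δ = fun _ => 0) ∨
      (σ = RingHom.id R ∧ IsSigmaDerivation (RingHom.id R) δ))
    (ι : R →+* S) (x : S) (hS : IsOreExtension σ δ ι x)
    (C : Subring R) (hC : ∀ r : R, r ∈ C ↔ (σ r = r ∧ δ r = 0)) :
    uniformDim C R ≤ uniformDim (Subring.center S) S := by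
  unfold uniformDim
  refine iSup_le fun n => iSup_le fun hn => ?_
  obtain ⟨g, hg0, hgI⟩ := hn
  exact le_iSup_of_le n (le_iSup_of_le
    ⟨fun i => liftSub σ δ ι x C hφ hS hC (g i),
      fun i => liftSub_ne_bot σ δ ι x C hφ hS hC (hg0 i),
      liftSub_indep σ δ ι x C hφ hS hC hgI⟩ le_rfl)
end

section
/- Let R be a ring and S a right Ore set of regular elements of R. If M is a right R-module that is S-torsion free, then the uniform dimension of M over R equals the uniform dimension of M ⊗_R RS^{-1} over the localization RS^{-1}. -/
open scoped OreLocalization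

open OreLocalization

section AuxOreUniformDim

variable {R : Type*} [Ring R] {S : Submonoid R} [OreLocalization.OreSet S]
  {M : Type*} [AddCommGroup M] [Module R M]

lemma aux_oreDiv_eq_zero
    (hreg : ∀ s ∈ S, IsRegular s)
    (htf : ∀ (m : M) (s : S), (s : R) • m = 0 → m = 0)
    {m : M} {s : S} (h : m /ₒ s = (0 : M[S⁻¹])) : m = 0 := by
  rw [← zero_oreDiv (X := M) s, oreDiv_eq_iff] at h
  obtain ⟨u, v, h1, h2⟩ := h
  have h2' : (u : R) * (s : R) = v * (s : R) := by exact_mod_cast h2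
  have hv : (u : R) = v := (hreg s s.2).right h2'
  have h1' : v • m = 0 := by
    simpa [Submonoid.smul_def] using h1.symm
  exact htf m ⟨v, hv ▸ u.2⟩ h1'

/-- The submodule of `M[S⁻¹]` consisting of fractions with numerator in `N`. -/
def fracSubmodule (S : Submonoid R) [OreLocalization.OreSet S] (N : Submodule R M) :
    Submodule R[S⁻¹] M[S⁻¹] where
  carrier := {x | ∃ m ∈ N, ∃ s : S, x = m /ₒ s}
  zero_mem' := ⟨0, N.zero_mem, 1, (zero_oreDiv 1).symm⟩
  add_mem' := by
    rintro x y ⟨m, hm, s, rfl⟩ ⟨m', hm', s', rfl⟩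
    obtain ⟨rb, sb, hb, he⟩ := oreDivAddChar' m m' s s'
    refine ⟨sb • m + rb • m', N.add_mem ?_ (N.smul_mem _ hm'), sb * s, he⟩
    simpa [Submonoid.smul_def] using N.smul_mem (sb : R) hm
  smul_mem' := by
    intro c x hx
    obtain ⟨m, hm, s, rfl⟩ := hx
    induction c using OreLocalization.ind with
    | _ r t =>
      obtain ⟨r', s', h, he⟩ := oreDivSMulChar' r m t s
      exact ⟨r' • m, N.smul_mem _ hm, s' * t, he⟩

lemma fracSubmodule_mono {N N' : Submodule R M} (h : N ≤ N') :
    fracSubmodule S N ≤ fracSubmodule S N' := by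
  rintro x ⟨m, hm, s, rfl⟩
  exact ⟨m, h hm, s, rfl⟩

lemma mem_fracSubmodule_inf {A B : Submodule R M} {x : M[S⁻¹]}
    (hA : x ∈ fracSubmodule S A) (hB : x ∈ fracSubmodule S B) :
    x ∈ fracSubmodule S (A ⊓ B) := by
  obtain ⟨m, hm, s, rfl⟩ := hA
  obtain ⟨m', hm', s', he⟩ := hB
  rw [oreDiv_eq_iff] at he
  obtain ⟨u, v, h1, h2⟩ := he
  have hvs : v * (s : R) ∈ S := by
    have : ((u * s' : S) : R) = v * s := by exact_mod_cast h2
    exact this ▸ (u * s').2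
  refine ⟨v • m, ⟨A.smul_mem v hm, ?_⟩, ⟨v * s, hvs⟩, OreLocalization.expand m s v hvs⟩
  rw [← h1, Submonoid.smul_def]
  exact B.smul_mem _ hm'

/-- Pull back a submodule of `M[S⁻¹]` along `m ↦ m /ₒ 1`. -/
def comapFrac (S : Submonoid R) [OreLocalization.OreSet S]
    (P : Submodule R[S⁻¹] M[S⁻¹]) : Submodule R M where
  carrier := {m | m /ₒ (1 : S) ∈ P}
  zero_mem' := by
    show (0 : M) /ₒ (1 : S) ∈ P
    rw [zero_oreDiv]; exact P.zero_mem
  add_mem' := by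
    intro a b ha hb
    show (a + b) /ₒ (1 : S) ∈ P
    rw [← add_oreDiv]; exact P.add_mem ha hb
  smul_mem' := by
    intro r m hm
    show (r • m) /ₒ (1 : S) ∈ P
    rw [← smul_div_one]
    exact P.smul_mem _ hm

lemma comapFrac_mono {P P' : Submodule R[S⁻¹] M[S⁻¹]} (h : P ≤ P') :
    comapFrac S P ≤ comapFrac S P' := fun _ hm => h hm

lemma comapFrac_ne_bot
    {P : Submodule R[S⁻¹] M[S⁻¹]} (h : P ≠ ⊥) : comapFrac S P ≠ ⊥ := by
  obtain ⟨x, hxP, hx0⟩ := Submodule.exists_mem_ne_zero_of_ne_bot h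
  induction x using OreLocalization.ind with
  | _ m s =>
    rw [Submodule.ne_bot_iff]
    refine ⟨m, ?_, fun hm => hx0 (by rw [hm, zero_oreDiv])⟩
    show m /ₒ (1 : S) ∈ P
    have : ((s : R) /ₒ (1 : S)) • (m /ₒ s) = m /ₒ (1 : S) := OreLocalization.smul_cancel
    rw [← this]
    exact P.smul_mem _ hxP

lemma fracSubmodule_ne_bot (hreg : ∀ s ∈ S, IsRegular s)
    (htf : ∀ (m : M) (s : S), (s : R) • m = 0 → m = 0)
    {N : Submodule R M} (h : N ≠ ⊥) : fracSubmodule S N ≠ ⊥ := by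
  obtain ⟨m, hmN, hm0⟩ := Submodule.exists_mem_ne_zero_of_ne_bot h
  rw [Submodule.ne_bot_iff]
  exact ⟨m /ₒ (1 : S), ⟨m, hmN, 1, rfl⟩, fun hc => hm0 (aux_oreDiv_eq_zero hreg htf hc)⟩

lemma iSupIndep_fracSubmodule {ι : Type*} {f : ι → Submodule R M} (hf : iSupIndep f) :
    iSupIndep (fun i => fracSubmodule S (f i)) := by
  intro i
  rw [disjoint_iff_inf_le]
  intro x hx
  have hx1 : x ∈ fracSubmodule S (f i) := hx.1
  have hsup : (⨆ j, ⨆ _ : j ≠ i, fracSubmodule S (f j)) ≤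
      fracSubmodule S (⨆ j, ⨆ _ : j ≠ i, f j) :=
    iSup₂_le fun j hj => fracSubmodule_mono (le_iSup₂ (f := fun j (_ : j ≠ i) => f j) j hj)
  have hx2 : x ∈ fracSubmodule S (⨆ j, ⨆ _ : j ≠ i, f j) := hsup hx.2
  have hmem := mem_fracSubmodule_inf hx1 hx2
  have hbot : f i ⊓ (⨆ j, ⨆ _ : j ≠ i, f j) = ⊥ := disjoint_iff.mp (hf i)
  rw [hbot] at hmem
  obtain ⟨m, hm, s, rfl⟩ := hmem
  rw [Submodule.mem_bot] at hm
  subst hm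
  rw [zero_oreDiv]
  exact Submodule.zero_mem ⊥

lemma iSupIndep_comapFrac (hreg : ∀ s ∈ S, IsRegular s)
    (htf : ∀ (m : M) (s : S), (s : R) • m = 0 → m = 0)
    {ι : Type*} {g : ι → Submodule R[S⁻¹] M[S⁻¹]} (hg : iSupIndep g) :
    iSupIndep (fun i => comapFrac S (g i)) := by
  intro i
  rw [disjoint_iff_inf_le]
  intro m hm
  have hm1 : m ∈ comapFrac S (g i) := hm.1
  have hsup : (⨆ j, ⨆ _ : j ≠ i, comapFrac S (g j)) ≤
      comapFrac S (⨆ j, ⨆ _ : j ≠ i, g j) :=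
    iSup₂_le fun j hj => comapFrac_mono (le_iSup₂ (f := fun j (_ : j ≠ i) => g j) j hj)
  have hm2 : m ∈ comapFrac S (⨆ j, ⨆ _ : j ≠ i, g j) := hsup hm.2
  have hbot : g i ⊓ (⨆ j, ⨆ _ : j ≠ i, g j) = ⊥ := disjoint_iff.mp (hg i)
  have : m /ₒ (1 : S) ∈ g i ⊓ (⨆ j, ⨆ _ : j ≠ i, g j) := ⟨hm1, hm2⟩
  rw [hbot, Submodule.mem_bot] at this
  rw [Submodule.mem_bot]
  exact aux_oreDiv_eq_zero hreg htf this

end AuxOreUniformDim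

/-- Let `R` be a ring and `S` an Ore set of regular elements of `R`.  If `M`
is an `R`-module which is `S`-torsion free, then the uniform dimension of `M` over `R`
equals the uniform dimension of the localized module `M[S⁻¹] ≅ M ⊗_R R[S⁻¹]` over the
Ore localization `R[S⁻¹]`. -/
theorem uniformDim_oreLocalization
    {R : Type*} [Ring R] (S : Submonoid R) [OreLocalization.OreSet S]
    (hreg : ∀ s ∈ S, IsRegular s)
    (M : Type*) [AddCommGroup M] [Module R M]
    (htf : ∀ (m : M) (s : S), (s : R) • m = 0 → m = 0) :
    uniformDim R M = uniformDim (R[S⁻¹]) (M[S⁻¹]) := by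
  unfold uniformDim
  apply le_antisymm
  · refine iSup_le fun n => iSup_le fun h => ?_
    obtain ⟨f, hf0, hfi⟩ := h
    refine le_iSup_of_le n (le_iSup_of_le ⟨fun i => fracSubmodule S (f i),
      fun i => fracSubmodule_ne_bot hreg htf (hf0 i), iSupIndep_fracSubmodule hfi⟩ le_rfl)
  · refine iSup_le fun n => iSup_le fun h => ?_
    obtain ⟨g, hg0, hgi⟩ := h
    refine le_iSup_of_le n (le_iSup_of_le ⟨fun i => comapFrac S (g i),
      fun i => comapFrac_ne_bot (hg0 i), iSupIndep_comapFrac hreg htf hgi⟩ le_rfl)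
end

section
/- Let R be a prime ring, σ an injective endomorphism and δ a σ-derivation of R. If f = a x^n + (lower degree terms) is a central element of R[x;σ,δ] of degree n ≥ 1, then the leading coefficient a is a regular element of R, σ(a) = a, and σ^n restricts to the identity on the center Z(R); moreover σ restricted to Z(R) is an automorphism of Z(R). -/
/-- A (possibly noncommutative) ring is prime: `aRb = 0` implies `a = 0` or `b = 0`. -/
def IsPrimeRing (R : Type*) [Ring R] : Prop :=
  (∀ a b : R, (∀ r : R, a * r * b = 0) → a = 0 ∨ b = 0) ∧ (0 : R) ≠ 1

section OreAux
variable {R S : Type*} [Ring R] [Ring S]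

noncomputable def oreShiftOp (σ : R →+* R) (δ : R → R) (h0 : δ 0 = 0) (g : ℕ →₀ R) : ℕ →₀ R :=
  Finsupp.mapDomain Nat.succ (g.mapRange σ (map_zero σ)) + g.mapRange δ h0

lemma oreShiftOp_succ (σ : R →+* R) (δ : R → R) (h0 : δ 0 = 0) (g : ℕ →₀ R) (j : ℕ) :
    oreShiftOp σ δ h0 g (j + 1) = σ (g j) + δ (g (j + 1)) := by
  have : Finsupp.mapDomain Nat.succ (g.mapRange σ (map_zero σ)) (j+1)
      = (g.mapRange σ (map_zero σ)) j := Finsupp.mapDomain_apply Nat.succ_injective _ j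
  simp [oreShiftOp, Finsupp.add_apply, this, Finsupp.mapRange_apply]

lemma ore_shift_sum (σ : R →+* R) (δ : R → R) (h0 : δ 0 = 0) (ι : R →+* S) (x : S)
    (hrel : ∀ a : R, x * ι a = ι (σ a) * x + ι (δ a)) (g : ℕ →₀ R) :
    x * (g.sum fun i a => ι a * x ^ i)
      = (oreShiftOp σ δ h0 g).sum fun i a => ι a * x ^ i := by
  rw [Finsupp.mul_sum]
  have step : ∀ (i : ℕ) (a : R), x * (ι a * x ^ i) = ι (σ a) * x ^ (i+1) + ι (δ a) * x ^ i := by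
    intro i a
    rw [← mul_assoc, hrel, add_mul, mul_assoc, ← pow_succ']
  calc g.sum (fun i a => x * (ι a * x ^ i))
      = g.sum (fun i a => ι (σ a) * x ^ (i+1) + ι (δ a) * x ^ i) := by
        apply Finsupp.sum_congr; intro i _; exact step i _
    _ = g.sum (fun i a => ι (σ a) * x ^ (i+1)) + g.sum (fun i a => ι (δ a) * x ^ i) :=
        Finsupp.sum_add
    _ = (oreShiftOp σ δ h0 g).sum fun i a => ι a * x ^ i := by
        rw [oreShiftOp, Finsupp.sum_add_index' (fun i => by simp) (fun i b₁ b₂ => by rw [map_add, add_mul])]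
        rw [Finsupp.sum_mapDomain_index (fun b => by simp) (fun b m₁ m₂ => by rw [map_add, add_mul])]
        rw [Finsupp.sum_mapRange_index (fun i => by simp), Finsupp.sum_mapRange_index (fun i => by simp)]

/-- The coefficients of `x^m * ι r`. -/
noncomputable def oreE (σ : R →+* R) (δ : R → R) (h0 : δ 0 = 0) : ℕ → R → (ℕ →₀ R)
  | 0, r => Finsupp.single 0 r
  | (m+1), r => oreShiftOp σ δ h0 (oreE σ δ h0 m r)

lemma oreE_vanish (σ : R →+* R) (δ : R → R) (h0 : δ 0 = 0) :
    ∀ (m : ℕ) (r : R) (j : ℕ), m < j → oreE σ δ h0 m r j = 0 := by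
  intro m
  induction m with
  | zero => intro r j hj; simp [oreE, Finsupp.single_apply]; omega
  | succ m ih =>
    intro r j hj
    obtain ⟨k, rfl⟩ : ∃ k, j = k + 1 := ⟨j - 1, by omega⟩
    rw [oreE, oreShiftOp_succ, ih r k (by omega), ih r (k+1) (by omega), map_zero, h0, add_zero]

lemma oreE_top (σ : R →+* R) (δ : R → R) (h0 : δ 0 = 0) :
    ∀ (m : ℕ) (r : R), oreE σ δ h0 m r m = (⇑σ)^[m] r := by
  intro m
  induction m with
  | zero => intro r; simp [oreE]
  | succ m ih =>
    intro r
    rw [oreE, oreShiftOp_succ, ih r, oreE_vanish σ δ h0 m r (m+1) (by omega), h0, add_zero,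
      Function.iterate_succ_apply']

lemma oreE_sum (σ : R →+* R) (δ : R → R) (h0 : δ 0 = 0) (ι : R →+* S) (x : S)
    (hrel : ∀ a : R, x * ι a = ι (σ a) * x + ι (δ a)) :
    ∀ (m : ℕ) (r : R), x ^ m * ι r = (oreE σ δ h0 m r).sum fun i a => ι a * x ^ i := by
  intro m
  induction m with
  | zero => intro r; simp [oreE, Finsupp.sum_single_index]
  | succ m ih =>
    intro r
    rw [pow_succ', mul_assoc, ih r, oreE, ore_shift_sum σ δ h0 ι x hrel]

lemma ore_repr_unique (σ : R →+* R) (δ : R → R) (ι : R →+* S) (x : S)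
    (huniq : ∀ c : ℕ →₀ R, (c.sum fun i a => ι a * x ^ i) = 0 → c = 0)
    (c d : ℕ →₀ R) (h : (c.sum fun i a => ι a * x ^ i) = d.sum fun i a => ι a * x ^ i) :
    c = d := by
  have hsub : ((c - d).sum fun i a => ι a * x ^ i) = 0 := by
    rw [Finsupp.sum_sub_index (fun i b₁ b₂ => by rw [map_sub, sub_mul]), h, sub_self]
  have := huniq _ hsub
  exact sub_eq_zero.mp this

end OreAux

/-- Let `R` be a prime ring, `σ` an injective endomorphism, `δ` a
`σ`-derivation, and let `f = a xⁿ + (lower terms)` be a central element of `R[x;σ,δ]` of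
degree `n ≥ 1`.  Then the leading coefficient `a` is regular, `σ(a) = a`, `σⁿ` is the
identity on the center `Z(R)`, and `σ` restricts to an automorphism of `Z(R)`. -/
theorem leadingCoeff_of_central_polynomial
    {R S : Type*} [Ring R] [Ring S] (hprime : IsPrimeRing R)
    (σ : R →+* R) (hσ : Function.Injective σ)
    (δ : R → R) (hδ : IsSigmaDerivation σ δ)
    (ι : R →+* S) (x : S) (hS : IsOreExtension σ δ ι x)
    (f : S) (hf : f ∈ Subring.center S)
    (n : ℕ) (hn : 1 ≤ n) (a : R) (ha : a ≠ 0)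
    (c : ℕ →₀ R) (hrepr : f = c.sum fun i b => ι b * x ^ i)
    (hlead : c n = a) (htop : ∀ m, n < m → c m = 0) :
    IsRegular a ∧ σ a = a ∧ (∀ z ∈ Subring.center R, (⇑σ)^[n] z = z) ∧
      Set.BijOn σ (Subring.center R : Set R) (Subring.center R : Set R) := by
  have h0 : δ 0 = 0 := by
    have := hδ.1 0 0; rw [add_zero] at this; exact (left_eq_add.mp this)
  have hcomm : ∀ g : S, g * f = f * g := fun g => Subring.mem_center_iff.mp hf g
  -- (B) : σ a = a, from x f = f x
  have hsa : σ a = a := by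
    have h1 : x * f = (oreShiftOp σ δ h0 c).sum fun i b => ι b * x ^ i := by
      rw [hrepr]; exact ore_shift_sum σ δ h0 ι x hS.rel c
    have h2 : f * x = (Finsupp.mapDomain Nat.succ c).sum fun i b => ι b * x ^ i := by
      rw [hrepr, Finsupp.sum_mul,
        Finsupp.sum_mapDomain_index (fun b => by simp) (fun b m₁ m₂ => by rw [map_add, add_mul])]
      apply Finsupp.sum_congr
      intro i _
      rw [mul_assoc, ← pow_succ]
    have heq : oreShiftOp σ δ h0 c = Finsupp.mapDomain Nat.succ c := by
      apply ore_repr_unique σ δ ι x hS.unique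
      rw [← h1, ← h2, hcomm x]
    have := congrArg (fun g : ℕ →₀ R => g (n+1)) heq
    simp only [oreShiftOp_succ] at this
    rw [htop (n+1) (by omega), h0, add_zero,
      Finsupp.mapDomain_apply Nat.succ_injective, hlead] at this
    exact this
  -- (A) : ∀ r, r * a = a * σ^[n] r
  have hstar : ∀ r : R, r * a = a * (⇑σ)^[n] r := by
    intro r
    set D : ℕ →₀ R := c.sum (fun i b => (oreE σ δ h0 i r).mapRange (fun u => b * u) (mul_zero b))
      with hD
    have h1 : f * ι r = D.sum fun i b => ι b * x ^ i := by
      rw [hD, Finsupp.sum_sum_index (fun i => by simp) (fun i b₁ b₂ => by rw [map_add, add_mul])]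
      rw [hrepr, Finsupp.sum_mul]
      apply Finsupp.sum_congr
      intro i _
      rw [Finsupp.sum_mapRange_index (fun j => by simp), mul_assoc,
        oreE_sum σ δ h0 ι x hS.rel i r, Finsupp.mul_sum]
      apply Finsupp.sum_congr
      intro j _
      rw [← mul_assoc, ← map_mul]
    have h2 : ι r * f = (c.mapRange (fun u => r * u) (mul_zero r)).sum fun i b => ι b * x ^ i := by
      rw [hrepr, Finsupp.mul_sum, Finsupp.sum_mapRange_index (fun j => by simp)]
      apply Finsupp.sum_congr
      intro i _
      rw [← mul_assoc, ← map_mul]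
    have heq : D = c.mapRange (fun u => r * u) (mul_zero r) := by
      apply ore_repr_unique σ δ ι x hS.unique
      rw [← h1, ← h2, hcomm (ι r)]
    have hDn : D n = a * (⇑σ)^[n] r := by
      rw [hD, Finsupp.sum_apply]
      rw [Finsupp.sum]
      have hmem : n ∈ c.support := Finsupp.mem_support_iff.mpr (by rw [hlead]; exact ha)
      rw [Finset.sum_eq_single_of_mem n hmem]
      · rw [Finsupp.mapRange_apply, oreE_top σ δ h0, hlead]
      · intro i hi hne
        rw [Finsupp.mapRange_apply]
        rcases lt_or_gt_of_ne hne with hlt | hgt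
        · rw [oreE_vanish σ δ h0 i r n hlt, mul_zero]
        · exfalso; exact (Finsupp.mem_support_iff.mp hi) (htop i hgt)
    have := congrArg (fun g : ℕ →₀ R => g n) heq
    simp only [hDn, Finsupp.mapRange_apply, hlead] at this
    exact this.symm
  -- basic consequences
  have hiter : (⇑σ)^[n] a = a := Function.iterate_fixed hsa n
  have hR : ∀ b : R, b * a = 0 → b = 0 := by
    intro b hb
    rcases hprime.1 b a (fun r => by rw [mul_assoc, hstar r, ← mul_assoc, hb, zero_mul]) with h | h
    · exact h
    · exact absurd h ha
  have hL : ∀ b : R, a * b = 0 → b = 0 := by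
    intro b hb
    apply hR
    have h1 : (⇑σ)^[n] (a * b) = 0 := by rw [hb, ← RingHom.coe_pow, map_zero]
    rw [← RingHom.coe_pow, map_mul, RingHom.coe_pow, hiter] at h1
    rw [hstar b, h1]
  have hreg : IsRegular a := by
    constructor
    · intro u v huv
      have huv' : a * u = a * v := huv
      have : a * (u - v) = 0 := by rw [mul_sub, huv', sub_self]
      exact sub_eq_zero.mp (hL _ this)
    · intro u v huv
      have huv' : u * a = v * a := huv
      have : (u - v) * a = 0 := by rw [sub_mul, huv', sub_self]
      exact sub_eq_zero.mp (hR _ this)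
  have hZ : ∀ z ∈ Subring.center R, (⇑σ)^[n] z = z := by
    intro z hz
    have hza : a * z = z * a := Subring.mem_center_iff.mp hz a
    have h1 : a * ((⇑σ)^[n] z - z) = 0 := by
      rw [mul_sub, ← hstar z, hza, sub_self]
    exact sub_eq_zero.mp (hL _ h1)
  have hmapsto : ∀ z ∈ Subring.center R, σ z ∈ Subring.center R := by
    intro z hz
    have hzn : (⇑σ)^[n] z = z := hZ z hz
    have hσza : σ z * a = a * σ z := by
      have h2 := hstar (σ z)
      rwa [← Function.iterate_succ_apply, Function.iterate_succ_apply', hzn] at h2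
    rw [Subring.mem_center_iff]
    intro r
    obtain ⟨m, rfl⟩ : ∃ m, n = m + 1 := ⟨n - 1, by omega⟩
    have hcom : σ z * (⇑σ)^[m+1] r = (⇑σ)^[m+1] r * σ z := by
      rw [Function.iterate_succ_apply', ← map_mul, ← map_mul,
        Subring.mem_center_iff.mp hz ((⇑σ)^[m] r)]
    have e1 : σ z * r * a = a * (σ z * (⇑σ)^[m+1] r) := by
      rw [mul_assoc, hstar r, ← mul_assoc, hσza, mul_assoc]
    have e2 : r * σ z * a = a * ((⇑σ)^[m+1] r * σ z) := by
      rw [mul_assoc, hσza, ← mul_assoc, hstar r, mul_assoc]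
    have key : (σ z * r - r * σ z) * a = 0 := by
      rw [sub_mul, e1, e2, hcom, sub_self]
    exact (sub_eq_zero.mp (hR _ key)).symm
  refine ⟨hreg, hsa, hZ, hmapsto, Function.Injective.injOn hσ, ?_⟩
  intro z hz
  have hiterZ : ∀ k, (⇑σ)^[k] z ∈ Subring.center R := by
    intro k
    induction k with
    | zero => exact hz
    | succ k ih => rw [Function.iterate_succ_apply']; exact hmapsto _ ih
  refine ⟨(⇑σ)^[n-1] z, hiterZ (n-1), ?_⟩
  have h3 : σ ((⇑σ)^[n-1] z) = (⇑σ)^[n] z :=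
    (Function.iterate_succ_apply' σ (n-1) z).symm.trans (by congr 1; omega)
  rw [h3, hZ z hz]
end

section
/- Let R be a commutative domain with σ an injective endomorphism and δ a σ-derivation, with Z^{σ,δ} = {z ∈ R : σ(z)=z, δ(z)=0}. If the uniform dimension of R over Z^{σ,δ} is finite, then the localization R(Z^{σ,δ}\{0})^{-1} is a field equal to the fraction field of R. -/
/-- If `r ≠ 0` is a root of a nonzero polynomial over a subring `C` of a domain `R`,
then some nonzero multiple of `r` lies in `C`. -/
lemma aux_poly_root {R : Type*} [CommRing R] [IsDomain R] (C : Subring R)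
    (r : R) (hr : r ≠ 0) :
    ∀ n (p : Polynomial C), p.natDegree ≤ n → p ≠ 0 → Polynomial.aeval r p = 0 →
      ∃ c : C, c ≠ 0 ∧ ∃ t : R, r * t = (c : R) := by
  intro n
  induction n with
  | zero =>
    intro p hdeg hp0 heval
    have hpc : p = Polynomial.C (p.coeff 0) := Polynomial.eq_C_of_natDegree_le_zero hdeg
    refine ⟨p.coeff 0, ?_, 0, ?_⟩
    · intro h; apply hp0; rw [hpc, h, map_zero]
    · rw [mul_zero]
      have h2 := heval
      rw [hpc, Polynomial.aeval_C] at h2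
      exact h2.symm
  | succ n ih =>
    intro p hdeg hp0 heval
    have hps : Polynomial.X * p.divX + Polynomial.C (p.coeff 0) = p :=
      Polynomial.X_mul_divX_add p
    by_cases h0 : p.coeff 0 = 0
    · have hps' : Polynomial.X * p.divX = p := by
        have h4 := hps
        rw [h0, map_zero, add_zero] at h4
        exact h4
      have hdx0 : p.divX ≠ 0 := by
        intro h; apply hp0; rw [← hps', h, mul_zero]
      have heval' : Polynomial.aeval r p.divX = 0 := by
        have h3 : Polynomial.aeval r (Polynomial.X * p.divX) = 0 := by rw [hps']; exact heval
        rw [map_mul, Polynomial.aeval_X] at h3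
        rcases mul_eq_zero.mp h3 with h | h
        · exact absurd h hr
        · exact h
      refine ih p.divX ?_ hdx0 heval'
      have := Polynomial.natDegree_divX_eq_natDegree_tsub_one (p := p)
      omega
    · refine ⟨p.coeff 0, h0, -(Polynomial.aeval r p.divX), ?_⟩
      have h3 : Polynomial.aeval r (Polynomial.X * p.divX + Polynomial.C (p.coeff 0)) = 0 := by
        rw [hps]; exact heval
      rw [map_add, map_mul, Polynomial.aeval_X, Polynomial.aeval_C] at h3
      have hcoe : algebraMap C R (p.coeff 0) = ((p.coeff 0 : R)) := rfl
      rw [hcoe] at h3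
      linear_combination -h3

/-- In the setting of the theorem, every nonzero element of `R` divides a nonzero
element of `C`. -/
lemma aux_divides_constant {R : Type*} [CommRing R] [IsDomain R]
    (C : Subring R) (hfin : uniformDim C R ≠ ⊤) (r : R) (hr : r ≠ 0) :
    ∃ c : C, c ≠ 0 ∧ ∃ t : R, r * t = (c : R) := by
  -- get a finite bound on uniform dimension
  obtain ⟨N, hN⟩ := WithTop.ne_top_iff_exists.mp hfin
  -- the powers 1, r, ..., r^N are linearly dependent over C
  have hdep : ¬ LinearIndependent C (fun i : Fin (N + 1) => r ^ (i : ℕ)) := by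
    intro hli
    have hindep := hli.iSupIndep_span_singleton
    have hne : ∀ i : Fin (N + 1), Submodule.span C {r ^ (i : ℕ)} ≠ ⊥ := by
      intro i h
      have : r ^ (i : ℕ) = 0 := by
        have := Submodule.mem_span_singleton_self (R := C) (r ^ (i : ℕ))
        rw [h] at this
        simpa using this
      exact pow_ne_zero _ hr this
    have hle : ((N + 1 : ℕ) : ℕ∞) ≤ uniformDim C R := by
      refine le_iSup₂ (f := fun (n : ℕ)
        (_ : ∃ f : Fin n → Submodule C R, (∀ i, f i ≠ ⊥) ∧ iSupIndep f) => (n : ℕ∞))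
        (N + 1) ⟨_, hne, hindep⟩
    rw [← hN] at hle
    exact absurd (Nat.cast_le.mp hle) (by omega)
  obtain ⟨g, hgsum, i₀, hgi₀⟩ := Fintype.not_linearIndependent_iff.mp hdep
  -- build the polynomial with coefficients g
  set p : Polynomial C := ∑ i : Fin (N + 1), Polynomial.monomial (i : ℕ) (g i) with hp
  have hpcoeff : ∀ j : Fin (N + 1), p.coeff (j : ℕ) = g j := by
    intro j
    rw [hp, Polynomial.finset_sum_coeff]
    rw [Finset.sum_eq_single j]
    · simp
    · intro b _ hbj
      rw [Polynomial.coeff_monomial, if_neg]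
      exact fun h => hbj (Fin.ext h)
    · intro h; exact absurd (Finset.mem_univ j) h
  have hp0 : p ≠ 0 := by
    intro h
    apply hgi₀
    have := hpcoeff i₀
    rw [h, Polynomial.coeff_zero] at this
    exact this.symm
  have heval : Polynomial.aeval r p = 0 := by
    have h5 : Polynomial.aeval r p = ∑ i : Fin (N + 1), g i • r ^ (i : ℕ) := by
      rw [hp, map_sum]
      refine Finset.sum_congr rfl fun i _ => ?_
      rw [Polynomial.aeval_monomial, Algebra.smul_def]
    rw [h5, hgsum]
  exact aux_poly_root C r hr p.natDegree p le_rfl hp0 heval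

/-- Let `R` be a commutative domain, `σ` an injective endomorphism and `δ`
a `σ`-derivation of `R`, and let `C = Z^{σ,δ} = {z : σ z = z, δ z = 0}` be the constant
subring.  If the uniform dimension of `R` as a `C`-module is finite, then the localization
of `R` at the nonzero elements of `C` is a field, equal to the field of fractions of `R`. -/
theorem localization_at_constants_isField
    {R : Type*} [CommRing R] [IsDomain R]
    (σ : R →+* R) (hσ : Function.Injective σ)
    (δ : R → R) (hδ : IsSigmaDerivation σ δ)
    (C : Subring R) (hC : ∀ r : R, r ∈ C ↔ (σ r = r ∧ δ r = 0))
    (hfin : uniformDim C R ≠ ⊤) :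
    IsField (Localization (C.toSubmonoid ⊓ nonZeroDivisors R)) ∧
      IsFractionRing R (Localization (C.toSubmonoid ⊓ nonZeroDivisors R)) := by
  set S : Submonoid R := C.toSubmonoid ⊓ nonZeroDivisors R with hS
  set L := Localization S
  have hSle : S ≤ nonZeroDivisors R := inf_le_right
  -- every nonzero element of R becomes a unit in L
  have hunit : ∀ r : R, r ≠ 0 → IsUnit (algebraMap R L r) := by
    intro r hr
    obtain ⟨c, hc0, t, hrt⟩ := aux_divides_constant C hfin r hr
    have hcR : (c : R) ≠ 0 := fun h => hc0 (Subtype.ext h)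
    have hcS : (c : R) ∈ S := by
      refine ⟨c.2, mem_nonZeroDivisors_of_ne_zero hcR⟩
    have hu : IsUnit (algebraMap R L (c : R)) := IsLocalization.map_units L ⟨(c : R), hcS⟩
    rw [← hrt, map_mul] at hu
    exact isUnit_of_mul_isUnit_left hu
  -- all nonzero divisors become units
  have hunit' : ∀ r ∈ nonZeroDivisors R, IsUnit (algebraMap R L r) := fun r hrd =>
    hunit r (nonZeroDivisors.ne_zero hrd)
  have hfrac : IsLocalization (nonZeroDivisors R) L :=
    IsLocalization.of_le S (nonZeroDivisors R) hSle hunit'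
  refine ⟨?_, hfrac⟩
  -- L is a field
  haveI : IsFractionRing R L := hfrac
  haveI : IsDomain L := IsFractionRing.isDomain R
  refine ⟨?_, mul_comm, ?_⟩
  · exact exists_pair_ne L
  · intro a ha
    obtain ⟨⟨x, y⟩, hxy : IsLocalization.mk' L x y = a⟩ := IsLocalization.mk'_surjective (nonZeroDivisors R) a
    have hx0 : x ≠ 0 := by
      intro h
      apply ha
      rw [← hxy, h, IsLocalization.mk'_eq_zero_iff]
      exact ⟨1, by simp⟩
    have hux : IsUnit (algebraMap R L x) := hunit x hx0
    have huy : IsUnit (algebraMap R L (y : R)) := IsLocalization.map_units L y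
    obtain ⟨u, hu⟩ := hux
    obtain ⟨v, hv⟩ := huy
    refine ⟨v * u⁻¹, ?_⟩
    have hmk : a = algebraMap R L x * (v⁻¹ : Lˣ) := by
      rw [← hxy, IsLocalization.mk'_eq_iff_eq_mul]
      rw [mul_assoc, ← hv]
      simp [mul_comm]
      rfl
    rw [hmk, ← hu]
    calc (u : L) * (v⁻¹ : Lˣ) * ((v : L) * (u⁻¹ : Lˣ))
        = ((u : L) * (u⁻¹ : Lˣ)) * ((v⁻¹ : Lˣ) * (v : L)) := by ring
      _ = 1 := by rw [Units.mul_inv, Units.inv_mul, one_mul]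
end

section
/- Let R be a ring, σ an endomorphism of R, and I an ideal with σ(I) ⊆ I. If both R and the Ore extension (R/I)[x;σ̄] satisfy polynomial identities, then the quotient R[x;σ]/(I[x;σ]·x) satisfies a polynomial identity. -/
private lemma aux_mul_apply_unique {α : Type*} (f g : MonoidAlgebra ℤ (FreeMonoid α))
    (a₀ b₀ : FreeMonoid α)
    (h : ∀ a ∈ f.coeff.support, ∀ b ∈ g.coeff.support, a * b = a₀ * b₀ → a = a₀ ∧ b = b₀) :
    (f * g).coeff (a₀ * b₀) = f.coeff a₀ * g.coeff b₀ := by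
  classical
  rw [MonoidAlgebra.coeff_mul]
  unfold Finsupp.sum
  rw [Finset.sum_eq_single a₀]
  · dsimp only
    rw [Finset.sum_eq_single b₀]
    · simp
    · intro b _ hbne
      rw [if_neg fun hab => hbne (mul_left_cancel hab)]
    · intro hb0
      simp [Finsupp.notMem_support_iff.mp hb0]
  · intro a ha hane
    apply Finset.sum_eq_zero
    intro b hb
    dsimp only
    rw [if_neg fun hab => hane (h a ha b hb hab).1]
  · intro ha0
    apply Finset.sum_eq_zero
    intro b _
    simp [Finsupp.notMem_support_iff.mp ha0]

private lemma aux_list_decomp {α : Type*} {z : α} :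
    ∀ {a w b v : List α}, z ∉ a → z ∉ w →
      a ++ z :: b = w ++ z :: v → a = w ∧ b = v := by
  intro a
  induction a with
  | nil =>
    intro w b v _ hw h
    cases w with
    | nil => simpa using h
    | cons c w' =>
      simp only [List.nil_append, List.cons_append, List.cons.injEq] at h
      simp only [List.mem_cons, not_or] at hw
      exact absurd h.1 hw.1
  | cons c a' ih =>
    intro w b v ha hw h
    cases w with
    | nil =>
      simp only [List.cons_append, List.nil_append, List.cons.injEq] at h
      simp only [List.mem_cons, not_or] at ha
      exact absurd h.1.symm ha.1
    | cons d w' =>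
      simp only [List.cons_append, List.cons.injEq] at h
      simp only [List.mem_cons, not_or] at ha hw
      obtain ⟨h3, h4⟩ := ih ha.2 hw.2 h.2
      exact ⟨by rw [h.1, h3], h4⟩

private lemma aux_lift_natural {A B : Type*} [Ring A] [Ring B] (F : A →+* B) {k : ℕ}
    (h : Fin k → A) (q : MonoidAlgebra ℤ (FreeMonoid (Fin k))) :
    F ((MonoidAlgebra.lift ℤ A (FreeMonoid (Fin k)) (FreeMonoid.lift h)) q) =
      (MonoidAlgebra.lift ℤ B (FreeMonoid (Fin k)) (FreeMonoid.lift (F ∘ h))) q := by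
  have hmono : (F.toMonoidHom.comp (FreeMonoid.lift h)) = FreeMonoid.lift (F ∘ h) :=
    FreeMonoid.hom_eq (by intro i; simp)
  have key : F.comp ((MonoidAlgebra.lift ℤ A (FreeMonoid (Fin k))) (FreeMonoid.lift h)).toRingHom
      = ((MonoidAlgebra.lift ℤ B (FreeMonoid (Fin k))) (FreeMonoid.lift (F ∘ h))).toRingHom := by
    apply MonoidAlgebra.ringHom_ext
    · intro b
      simp [MonoidAlgebra.lift_single, zsmul_eq_mul, map_intCast]
    · intro a
      simp only [RingHom.coe_comp, Function.comp_apply, AlgHom.toRingHom_eq_coe,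
        RingHom.coe_coe, MonoidAlgebra.lift_single, one_smul]
      exact DFunLike.congr_fun hmono a
  exact RingHom.congr_fun key q

private lemma aux_lift_mapDomain {A : Type*} [Ring A] {k N : ℕ} (e : Fin k → Fin N)
    (g : Fin N → A) (q : MonoidAlgebra ℤ (FreeMonoid (Fin k))) :
    (MonoidAlgebra.lift ℤ A (FreeMonoid (Fin N)) (FreeMonoid.lift g))
        (MonoidAlgebra.mapDomainRingHom ℤ (FreeMonoid.map e) q) =
      (MonoidAlgebra.lift ℤ A (FreeMonoid (Fin k)) (FreeMonoid.lift (g ∘ e))) q := by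
  have hmono : ((FreeMonoid.lift g).comp (FreeMonoid.map e)) = FreeMonoid.lift (g ∘ e) :=
    FreeMonoid.hom_eq (by intro i; simp)
  have key : ((MonoidAlgebra.lift ℤ A (FreeMonoid (Fin N))) (FreeMonoid.lift g)).toRingHom.comp
        (MonoidAlgebra.mapDomainRingHom ℤ (FreeMonoid.map e))
      = ((MonoidAlgebra.lift ℤ A (FreeMonoid (Fin k))) (FreeMonoid.lift (g ∘ e))).toRingHom := by
    apply MonoidAlgebra.ringHom_ext
    · intro b
      simp [MonoidAlgebra.mapDomainRingHom, Finsupp.mapDomain_single,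
        MonoidAlgebra.lift_single]
    · intro a
      simp only [AlgHom.toRingHom_eq_coe, RingHom.coe_comp, RingHom.coe_coe, Function.comp_apply]
      rw [show (MonoidAlgebra.mapDomainRingHom ℤ (FreeMonoid.map e))
            (MonoidAlgebra.single a (1:ℤ)) = MonoidAlgebra.single (FreeMonoid.map e a) 1 from
          MonoidAlgebra.mapDomain_single]
      simp only [MonoidAlgebra.lift_single, one_smul]
      exact DFunLike.congr_fun hmono a
  exact RingHom.congr_fun key q



/-- A ring satisfies a polynomial identity: there is a nonzero (indeed, with some
coefficient equal to `1`) element of the free `ℤ`-algebra on finitely many variables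
vanishing under every substitution. -/
def IsPIRing (R : Type*) [Ring R] : Prop :=
  ∃ (n : ℕ) (p : MonoidAlgebra ℤ (FreeMonoid (Fin n))) (w : FreeMonoid (Fin n)),
    p.coeff w = 1 ∧
    ∀ f : Fin n → R,
      (MonoidAlgebra.lift ℤ R (FreeMonoid (Fin n)) (FreeMonoid.lift f)) p = 0

private lemma aux_ore_lift {R S A : Type*} [Ring R] [Ring S] [Ring A]
    (σ : R →+* R) (ι : R →+* S) (x : S) (hS : IsOreExtension σ (fun _ => 0) ι x)
    (f : R →+* A) (u : A) (hu : ∀ a, u * f a = f (σ a) * u) :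
    ∃ ψ : S →+* A, ∀ c : ℕ →₀ R,
      ψ (c.sum fun i a => ι a * x ^ i) = c.sum fun i a => f a * u ^ i := by
  classical
  set Φ : (ℕ →₀ R) →+ S :=
    Finsupp.liftAddHom fun i => (AddMonoidHom.mulRight (x ^ i)).comp ι.toAddMonoidHom with hΦdef
  set Ψ : (ℕ →₀ R) →+ A :=
    Finsupp.liftAddHom fun i => (AddMonoidHom.mulRight (u ^ i)).comp f.toAddMonoidHom with hΨdef
  have hΦ : ∀ c : ℕ →₀ R, Φ c = c.sum fun i a => ι a * x ^ i := fun c => rfl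
  have hΨ : ∀ c : ℕ →₀ R, Ψ c = c.sum fun i a => f a * u ^ i := fun c => rfl
  have hbij : Function.Bijective Φ := by
    constructor
    · rw [injective_iff_map_eq_zero]
      intro c hc
      exact hS.unique c (by rw [← hΦ c, hc])
    · intro s
      obtain ⟨c, hc⟩ := hS.repr s
      exact ⟨c, by rw [hΦ, hc]⟩
  let e : (ℕ →₀ R) ≃+ S := AddEquiv.ofBijective Φ hbij
  have he : ∀ c, e c = Φ c := fun c => rfl
  let ψ₀ : S →+ A := Ψ.comp e.symm.toAddMonoidHom
  have key : ∀ c : ℕ →₀ R, ψ₀ (Φ c) = Ψ c := by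
    intro c
    show Ψ (e.symm (Φ c)) = Ψ c
    rw [← he, e.symm_apply_apply]
  have hΦsingle : ∀ (k : ℕ) (c : R), Φ (Finsupp.single k c) = ι c * x ^ k := by
    intro k c
    rw [hΦ, Finsupp.sum_single_index (by simp)]
  have hΨsingle : ∀ (k : ℕ) (c : R), Ψ (Finsupp.single k c) = f c * u ^ k := by
    intro k c
    rw [hΨ, Finsupp.sum_single_index (by simp)]
  have ψ₀single : ∀ (k : ℕ) (c : R), ψ₀ (ι c * x ^ k) = f c * u ^ k := by
    intro k c
    rw [← hΦsingle, key, hΨsingle]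
  have hx : ∀ a : R, x * ι a = ι (σ a) * x := by
    intro a
    have := hS.rel a
    simpa using this
  have hxp : ∀ (i : ℕ) (b : R), x ^ i * ι b = ι ((σ ^ i) b) * x ^ i := by
    intro i
    induction i with
    | zero => intro b; simp
    | succ i ih =>
      intro b
      have hσ : (σ ^ (i + 1)) b = (σ ^ i) (σ b) := by rw [pow_succ]; rfl
      rw [hσ, pow_succ, mul_assoc, hx b, ← mul_assoc, ih (σ b), mul_assoc]
  have hup : ∀ (i : ℕ) (b : R), u ^ i * f b = f ((σ ^ i) b) * u ^ i := by
    intro i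
    induction i with
    | zero => intro b; simp
    | succ i ih =>
      intro b
      have hσ : (σ ^ (i + 1)) b = (σ ^ i) (σ b) := by rw [pow_succ]; rfl
      rw [hσ, pow_succ, mul_assoc, hu b, ← mul_assoc, ih (σ b), mul_assoc]
  have mono : ∀ (i j : ℕ) (a b : R),
      ψ₀ ((ι a * x ^ i) * (ι b * x ^ j)) = ψ₀ (ι a * x ^ i) * ψ₀ (ι b * x ^ j) := by
    intro i j a b
    have h1 : (ι a * x ^ i) * (ι b * x ^ j) = ι (a * (σ ^ i) b) * x ^ (i + j) := by
      rw [mul_assoc, ← mul_assoc (x ^ i) (ι b) (x ^ j), hxp i b,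
        mul_assoc (ι ((σ ^ i) b)) (x ^ i) (x ^ j), ← pow_add, ← mul_assoc, ← map_mul]
    have h2 : (f a * u ^ i) * (f b * u ^ j) = f (a * (σ ^ i) b) * u ^ (i + j) := by
      rw [mul_assoc, ← mul_assoc (u ^ i) (f b) (u ^ j), hup i b,
        mul_assoc (f ((σ ^ i) b)) (u ^ i) (u ^ j), ← pow_add, ← mul_assoc, ← map_mul]
    rw [h1, ψ₀single, ψ₀single, ψ₀single, h2]
  have mul_right : ∀ (i : ℕ) (a : R) (t : S),
      ψ₀ ((ι a * x ^ i) * t) = ψ₀ (ι a * x ^ i) * ψ₀ t := by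
    intro i a t
    obtain ⟨d, rfl⟩ := hS.repr t
    rw [Finsupp.mul_sum, map_finsuppSum, map_finsuppSum, Finsupp.mul_sum]
    exact Finsupp.sum_congr fun j _ => mono i j a (d j)
  have hmul : ∀ s t : S, ψ₀ (s * t) = ψ₀ s * ψ₀ t := by
    intro s t
    obtain ⟨c, rfl⟩ := hS.repr s
    rw [Finsupp.sum_mul, map_finsuppSum, map_finsuppSum, Finsupp.sum_mul]
    exact Finsupp.sum_congr fun i _ => mul_right i (c i) t
  have hone : ψ₀ 1 = 1 := by
    have h1 : (1 : S) = ι 1 * x ^ 0 := by simp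
    rw [h1, ψ₀single]
    simp
  refine ⟨{ toFun := ψ₀, map_one' := hone, map_mul' := hmul,
            map_zero' := ψ₀.map_zero, map_add' := ψ₀.map_add }, ?_⟩
  intro c
  show ψ₀ (c.sum fun i a => ι a * x ^ i) = _
  rw [← hΦ, key, hΨ]


/-- Let `σ` be an endomorphism of `R` and `I` an ideal with `σ(I) ⊆ I`
(encoded via the quotient map `π : R →+* R'` with `R' = R/I` and the induced
endomorphism `σ'`).  If both `R` and the Ore extension `(R/I)[x;σ̄]` satisfy polynomial
identities, then so does the quotient `R[x;σ]/(I[x;σ]·x)` (encoded as a surjection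
`p : R[x;σ] →+* T` whose kernel consists of the polynomials `Σ_{i≥1} aᵢ xⁱ`, `aᵢ ∈ I`). -/
theorem quotient_of_skewPolynomial_isPIRing
    {R R' S S' T : Type*} [Ring R] [Ring R'] [Ring S] [Ring S'] [Ring T]
    (σ : R →+* R) (σ' : R' →+* R')
    (π : R →+* R') (hπ : Function.Surjective π)
    (hcomp : σ'.comp π = π.comp σ)
    (ι : R →+* S) (x : S) (hS : IsOreExtension σ (fun _ => 0) ι x)
    (ι' : R' →+* S') (y : S') (hS' : IsOreExtension σ' (fun _ => 0) ι' y)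
    (p : S →+* T) (hp : Function.Surjective p)
    (hker : ∀ s : S, p s = 0 ↔ ∃ c : ℕ →₀ R,
      s = (c.sum fun i a => ι a * x ^ i) ∧ c 0 = 0 ∧ ∀ i, π (c i) = 0)
    (hR : IsPIRing R) (hS'PI : IsPIRing S') :
    IsPIRing T := by
  classical
  obtain ⟨n, pn, w, hw1, hwvan⟩ := hR
  obtain ⟨m, qm, v, hv1, hvvan⟩ := hS'PI
  obtain ⟨ψ₁, hψ₁⟩ := aux_ore_lift σ ι x hS (RingHom.id R) 0 (by intro a; simp)
  obtain ⟨ψ₂, hψ₂⟩ := aux_ore_lift σ ι x hS (ι'.comp π) y (by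
    intro a
    have h2 : σ' (π a) = π (σ a) := RingHom.congr_fun hcomp a
    have h1 : y * ι' (π a) = ι' (σ' (π a)) * y := by simpa using hS'.rel (π a)
    rw [RingHom.comp_apply, RingHom.comp_apply, h1, h2])
  have hsum0 : ∀ c : ℕ →₀ R, (c.sum fun i a => (RingHom.id R) a * (0 : R) ^ i) = c 0 := by
    intro c
    rw [Finsupp.sum, Finset.sum_eq_single 0]
    · simp
    · intro i _ hi; simp [zero_pow hi]
    · intro h0; simp [Finsupp.notMem_support_iff.mp h0]
  have hkill : ∀ s : S, ψ₁ s = 0 → ψ₂ s = 0 → p s = 0 := by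
    intro s h1 h2
    obtain ⟨c, rfl⟩ := hS.repr s
    rw [hψ₁, hsum0] at h1
    rw [hψ₂] at h2
    have hmr : ((c.mapRange π (map_zero π)).sum fun i b => ι' b * y ^ i) = 0 := by
      rw [Finsupp.sum_mapRange_index (by intro i; simp)]
      exact h2
    have hc := hS'.unique _ hmr
    refine (hker _).mpr ⟨c, rfl, h1, fun i => ?_⟩
    have := DFunLike.congr_fun hc i
    simpa [Finsupp.mapRange_apply] using this
  -- the PI construction
  set N := n + 1 + m with hN
  let e₁ : Fin n → Fin N := fun i => ⟨i.1, by have := i.2; omega⟩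
  let e₃ : Fin m → Fin N := fun j => ⟨n + 1 + j.1, by have := j.2; omega⟩
  let z : Fin N := ⟨n, by omega⟩
  have he₁ : Function.Injective e₁ := fun a b h => Fin.ext (by
    have := congrArg Fin.val h; simpa using this)
  have he₃ : Function.Injective e₃ := fun a b h => Fin.ext (by
    have := congrArg Fin.val h; simp only [e₃] at this; omega)
  have hmapinj : ∀ {k : ℕ} (e : Fin k → Fin N), Function.Injective e →
      Function.Injective (FreeMonoid.map e) := by
    intro k e he a b h
    apply FreeMonoid.toList.injective
    have := congrArg FreeMonoid.toList h
    rw [FreeMonoid.toList_map, FreeMonoid.toList_map] at this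
    exact List.map_injective_iff.mpr he this
  let P1 : MonoidAlgebra ℤ (FreeMonoid (Fin N)) :=
    MonoidAlgebra.mapDomainRingHom ℤ (FreeMonoid.map e₁) pn
  let Q1 : MonoidAlgebra ℤ (FreeMonoid (Fin N)) :=
    MonoidAlgebra.mapDomainRingHom ℤ (FreeMonoid.map e₃) qm
  let XZ : MonoidAlgebra ℤ (FreeMonoid (Fin N)) := MonoidAlgebra.single (FreeMonoid.of z) 1
  have hP1 : P1.coeff = Finsupp.mapDomain (FreeMonoid.map e₁) pn.coeff := rfl
  have hQ1 : Q1.coeff = Finsupp.mapDomain (FreeMonoid.map e₃) qm.coeff := rfl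
  have hP1c : P1.coeff (FreeMonoid.map e₁ w) = 1 := by
    rw [hP1, Finsupp.mapDomain_apply (hmapinj e₁ he₁), hw1]
  have hQ1c : Q1.coeff (FreeMonoid.map e₃ v) = 1 := by
    rw [hQ1, Finsupp.mapDomain_apply (hmapinj e₃ he₃), hv1]
  refine ⟨N, P1 * (XZ * Q1),
    (FreeMonoid.map e₁ w) * (FreeMonoid.of z * FreeMonoid.map e₃ v), ?_, ?_⟩
  · -- coefficient is 1
    have hzP1 : ∀ a : FreeMonoid (Fin n), z ∉ FreeMonoid.toList (FreeMonoid.map e₁ a) := by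
      intro a hmem
      rw [FreeMonoid.toList_map] at hmem
      obtain ⟨i, -, hi⟩ := List.mem_map.mp hmem
      have := congrArg Fin.val hi
      simp only [e₁, z] at this
      omega
    have hsuppP1 : ∀ a ∈ P1.coeff.support, ∃ a', a = FreeMonoid.map e₁ a' := by
      intro a ha
      rw [hP1] at ha
      obtain ⟨a', -, rfl⟩ := Finset.mem_image.mp (Finsupp.mapDomain_support ha)
      exact ⟨a', rfl⟩
    have hsuppB : ∀ b ∈ (XZ * Q1).coeff.support,
        ∃ b', b = FreeMonoid.of z * FreeMonoid.map e₃ b' := by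
      intro b hb
      have hmem := MonoidAlgebra.support_coeff_mul_subset XZ Q1 hb
      obtain ⟨c, hc, d, hd, rfl⟩ := Finset.mem_mul.mp hmem
      have hc' : c = FreeMonoid.of z := Finset.mem_singleton.mp (Finsupp.support_single_subset hc)
      rw [hQ1] at hd
      obtain ⟨d', -, rfl⟩ := Finset.mem_image.mp (Finsupp.mapDomain_support hd)
      exact ⟨d', by rw [hc']⟩
    have huniq : ∀ a ∈ P1.coeff.support, ∀ b ∈ (XZ * Q1).coeff.support,
        a * b = (FreeMonoid.map e₁ w) * (FreeMonoid.of z * FreeMonoid.map e₃ v) →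
        a = FreeMonoid.map e₁ w ∧ b = FreeMonoid.of z * FreeMonoid.map e₃ v := by
      intro a ha b hb hab
      obtain ⟨a', rfl⟩ := hsuppP1 a ha
      obtain ⟨b', rfl⟩ := hsuppB b hb
      have hl : FreeMonoid.toList (FreeMonoid.map e₁ a') ++
            z :: FreeMonoid.toList (FreeMonoid.map e₃ b')
          = FreeMonoid.toList (FreeMonoid.map e₁ w) ++
            z :: FreeMonoid.toList (FreeMonoid.map e₃ v) := by
        have := congrArg FreeMonoid.toList hab
        simpa [FreeMonoid.toList_mul, FreeMonoid.toList_of] using this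
      obtain ⟨h1, h2⟩ := aux_list_decomp (hzP1 a') (hzP1 w) hl
      constructor
      · exact FreeMonoid.toList.injective h1
      · have : FreeMonoid.map e₃ b' = FreeMonoid.map e₃ v := FreeMonoid.toList.injective h2
        rw [this]
    rw [aux_mul_apply_unique P1 (XZ * Q1) _ _ huniq, hP1c, one_mul]
    have hiff : ∀ a, FreeMonoid.of z * a = FreeMonoid.of z * FreeMonoid.map e₃ v ↔
        a = FreeMonoid.map e₃ v := fun a => ⟨fun h => mul_left_cancel h, fun h => by rw [h]⟩
    rw [MonoidAlgebra.coeff_single_mul_eq_mul_coeff _ (fun a _ => hiff a), one_mul, hQ1c]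
  · -- vanishing
    intro ff
    choose g hg using fun i => hp (ff i)
    have hfg : ff = p ∘ g := funext fun i => (hg i).symm
    rw [hfg, ← aux_lift_natural p g]
    have hXZ : (MonoidAlgebra.lift ℤ S (FreeMonoid (Fin N)) (FreeMonoid.lift g)) XZ = g z := by
      simp [XZ, MonoidAlgebra.lift_single]
    have hsplit : (MonoidAlgebra.lift ℤ S (FreeMonoid (Fin N)) (FreeMonoid.lift g)) (P1 * (XZ * Q1))
        = (MonoidAlgebra.lift ℤ S (FreeMonoid (Fin N)) (FreeMonoid.lift g)) P1 *
          (g z * (MonoidAlgebra.lift ℤ S (FreeMonoid (Fin N)) (FreeMonoid.lift g)) Q1) := by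
      rw [map_mul, map_mul, hXZ]
    have hA : ψ₁ ((MonoidAlgebra.lift ℤ S (FreeMonoid (Fin N)) (FreeMonoid.lift g)) P1) = 0 := by
      rw [show ((MonoidAlgebra.lift ℤ S (FreeMonoid (Fin N))) (FreeMonoid.lift g)) P1 =
          (MonoidAlgebra.lift ℤ S (FreeMonoid (Fin n)) (FreeMonoid.lift (g ∘ e₁))) pn from
        aux_lift_mapDomain e₁ g pn]
      rw [aux_lift_natural ψ₁ (g ∘ e₁) pn]
      exact hwvan (ψ₁ ∘ (g ∘ e₁))
    have hB : ψ₂ ((MonoidAlgebra.lift ℤ S (FreeMonoid (Fin N)) (FreeMonoid.lift g)) Q1) = 0 := by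
      rw [show ((MonoidAlgebra.lift ℤ S (FreeMonoid (Fin N))) (FreeMonoid.lift g)) Q1 =
          (MonoidAlgebra.lift ℤ S (FreeMonoid (Fin m)) (FreeMonoid.lift (g ∘ e₃))) qm from
        aux_lift_mapDomain e₃ g qm]
      rw [aux_lift_natural ψ₂ (g ∘ e₃) qm]
      exact hvvan (ψ₂ ∘ (g ∘ e₃))
    apply hkill
    · rw [hsplit, map_mul, hA, zero_mul]
    · rw [hsplit, map_mul, map_mul, hB, mul_zero, mul_zero]
end

section
/- Let R be a PI ring and σ an endomorphism of R. If there exists n ≥ 1 such that R[x;σ̄] is a PI ring where σ̄ is the induced endomorphism on R/ker(σ^n), then R[x;σ] is a PI ring. -/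
attribute [local instance] Classical.propDecidable

noncomputable section AuxiliaryLemmas

/-- Evaluation of a free-algebra element. -/
def evalA {A : Type*} [Ring A] {k : ℕ} (p : MonoidAlgebra ℤ (FreeMonoid (Fin k)))
    (f : Fin k → A) : A :=
  (MonoidAlgebra.lift ℤ A (FreeMonoid (Fin k)) (FreeMonoid.lift f)) p

lemma freeMonoid_lift_map {α β : Type*} {A : Type*} [Monoid A] (e : α → β) (f : β → A)
    (w : FreeMonoid α) : FreeMonoid.lift f (FreeMonoid.map e w) = FreeMonoid.lift (f ∘ e) w := by
  have : (FreeMonoid.lift f).comp (FreeMonoid.map e) = FreeMonoid.lift (f ∘ e) :=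
    FreeMonoid.hom_eq (fun a => by simp)
  exact DFunLike.congr_fun this w

lemma evalA_mul {A : Type*} [Ring A] {k : ℕ} (p q : MonoidAlgebra ℤ (FreeMonoid (Fin k)))
    (f : Fin k → A) : evalA (p * q) f = evalA p f * evalA q f := map_mul _ _ _

lemma evalA_hom {A B : Type*} [Ring A] [Ring B] (h : A →+* B) {k : ℕ}
    (p : MonoidAlgebra ℤ (FreeMonoid (Fin k))) (f : Fin k → A) :
    h (evalA p f) = evalA p (⇑h ∘ f) := by
  unfold evalA
  rw [MonoidAlgebra.lift_apply, MonoidAlgebra.lift_apply, map_finsuppSum]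
  refine Finsupp.sum_congr fun w _ => ?_
  rw [map_zsmul]
  congr 1
  have : (h.toMonoidHom.comp (FreeMonoid.lift f)) = FreeMonoid.lift (⇑h ∘ f) :=
    FreeMonoid.hom_eq (fun a => by simp)
  exact DFunLike.congr_fun this w

lemma evalA_mapDomain {A : Type*} [Ring A] {a b : ℕ} (e : Fin a → Fin b)
    (p : MonoidAlgebra ℤ (FreeMonoid (Fin a))) (f : Fin b → A) :
    evalA (MonoidAlgebra.mapDomain (FreeMonoid.map e) p) f = evalA p (f ∘ e) := by
  unfold evalA
  rw [MonoidAlgebra.lift_apply, MonoidAlgebra.lift_apply, MonoidAlgebra.coeff_mapDomain,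
    Finsupp.sum_mapDomain_index (fun w => by simp) (fun w c d => by rw [add_smul])]
  exact Finsupp.sum_congr fun w _ => by rw [freeMonoid_lift_map]

lemma freeMonoid_lift_zero {A : Type*} [Ring A] {k : ℕ} (w : FreeMonoid (Fin k)) :
    FreeMonoid.lift (fun _ => (0:A)) w = if w = 1 then 1 else 0 := by
  induction w using FreeMonoid.inductionOn' with
  | one => simp
  | of_mul a w ih => simp [map_mul, FreeMonoid.lift_eval_of]

lemma evalA_zero_fn {A : Type*} [Ring A] {k : ℕ} (p : MonoidAlgebra ℤ (FreeMonoid (Fin k))) :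
    evalA p (fun _ => (0:A)) = (p.coeff 1) • (1 : A) := by
  unfold evalA
  rw [MonoidAlgebra.lift_apply]
  have h : (p.coeff.sum fun w c => c • FreeMonoid.lift (fun _ => (0:A)) w)
      = p.coeff.sum fun w c => if w = 1 then c • (1:A) else 0 := by
    refine Finsupp.sum_congr fun w _ => ?_
    rw [freeMonoid_lift_zero]; split_ifs <;> simp
  rw [h, Finsupp.sum_ite_eq' p.coeff 1 (fun w c => c • (1:A))]
  split_ifs with hmem
  · rfl
  · rw [Finsupp.notMem_support_iff.mp hmem, zero_smul]

/-- Normalization: a nontrivial PI ring has an identity with zero constant term. -/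
lemma pi_normalize {A : Type*} [Ring A] (h1 : (1:A) ≠ 0) (h : IsPIRing A) :
    ∃ (k : ℕ) (p : MonoidAlgebra ℤ (FreeMonoid (Fin k))) (w : FreeMonoid (Fin k)),
      p.coeff w = 1 ∧ p.coeff 1 = 0 ∧ ∀ f : Fin k → A, evalA p f = 0 := by
  obtain ⟨k, p, w, hw, hid⟩ := h
  have hid' : ∀ f : Fin k → A, evalA p f = 0 := hid
  have h0 : (p.coeff 1) • (1:A) = 0 := by rw [← evalA_zero_fn p]; exact hid' _
  have hw1 : w ≠ 1 := by
    intro hcontra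
    rw [hcontra] at hw
    rw [hw, one_smul] at h0
    exact h1 h0
  refine ⟨k, p - MonoidAlgebra.single (1 : FreeMonoid (Fin k)) (p.coeff 1), w, ?_, ?_, ?_⟩
  · rw [MonoidAlgebra.coeff_sub, Finsupp.sub_apply, MonoidAlgebra.coeff_single, Finsupp.single_apply, if_neg (fun hc => hw1 hc.symm), sub_zero, hw]
  · rw [MonoidAlgebra.coeff_sub, Finsupp.sub_apply, MonoidAlgebra.coeff_single, Finsupp.single_eq_same, sub_self]
  · intro f
    have h2 : evalA (p - MonoidAlgebra.single (1 : FreeMonoid (Fin k)) (p.coeff 1)) f = evalA p f - evalA (MonoidAlgebra.single (1 : FreeMonoid (Fin k)) (p.coeff 1)) f :=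
      map_sub _ _ _
    rw [h2, hid' f, zero_sub, neg_eq_zero]
    show (MonoidAlgebra.lift ℤ A (FreeMonoid (Fin k)) (FreeMonoid.lift f))
      (MonoidAlgebra.single 1 (p.coeff 1)) = 0
    rw [MonoidAlgebra.lift_single, show (FreeMonoid.lift f) 1 = 1 from map_one _]
    exact h0

/-- A trivial ring is PI. -/
lemma pi_of_trivial {A : Type*} [Ring A] (h1 : (1:A) = 0) : IsPIRing A := by
  refine ⟨1, MonoidAlgebra.single (FreeMonoid.of 0) 1, FreeMonoid.of 0, by simp, fun f => ?_⟩
  have h : ∀ a : A, a = 0 := fun a => by rw [← mul_one a, h1, mul_zero]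
  exact h _



lemma list_append_map_inj {α β γ : Type*} {e₁ : α → γ} {e₂ : β → γ}
    (h₁ : Function.Injective e₁) (h₂ : Function.Injective e₂)
    (hd : ∀ a b, e₁ a ≠ e₂ b) :
    ∀ (l₁ l₃ : List α) (l₂ l₄ : List β),
      l₁.map e₁ ++ l₂.map e₂ = l₃.map e₁ ++ l₄.map e₂ → l₁ = l₃ ∧ l₂ = l₄ := by
  intro l₁
  induction l₁ with
  | nil =>
    intro l₃ l₂ l₄ h
    cases l₃ with
    | nil =>
      simp only [List.map_nil, List.nil_append] at h
      exact ⟨rfl, List.map_injective_iff.mpr h₂ h⟩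
    | cons a t =>
      exfalso
      cases l₂ with
      | nil => simp at h
      | cons b t₂ =>
        simp only [List.map_nil, List.nil_append, List.map_cons, List.cons_append,
          List.cons.injEq] at h
        exact hd a b h.1.symm
  | cons a t ih =>
    intro l₃ l₂ l₄ h
    cases l₃ with
    | nil =>
      exfalso
      cases l₄ with
      | nil => simp at h
      | cons b t₄ =>
        simp only [List.map_cons, List.cons_append, List.map_nil, List.nil_append,
          List.cons.injEq] at h
        exact hd a b h.1
    | cons a' t' =>
      simp only [List.map_cons, List.cons_append, List.cons.injEq] at h
      obtain ⟨hh, ht⟩ := h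
      obtain ⟨h3, h4⟩ := ih t' l₂ l₄ ht
      exact ⟨by rw [h₁ hh, h3], h4⟩


variable {a b : ℕ}


/-- Product in the monoid algebra (forcing the convolution `Mul` instance). -/
def MAmul {G : Type*} [Monoid G] (p q : MonoidAlgebra ℤ G) : MonoidAlgebra ℤ G := p * q

lemma MAmul_eq {G : Type*} [Monoid G] (p q : MonoidAlgebra ℤ G) : MAmul p q = p * q := rfl

/-- Unique factorization of a two-block word. -/
lemma block_factor_unique {a b : ℕ} (u w : FreeMonoid (Fin a)) (v w' : FreeMonoid (Fin b))
    (h : FreeMonoid.map (Fin.castAdd b) u * FreeMonoid.map (Fin.natAdd a) v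
       = FreeMonoid.map (Fin.castAdd b) w * FreeMonoid.map (Fin.natAdd a) w') :
    u = w ∧ v = w' := by
  have h₁ : Function.Injective (Fin.castAdd (n := a) b) := Fin.castAdd_injective a b
  have h₂ : Function.Injective (Fin.natAdd (m := b) a) := fun i j hij => by
    have := congrArg Fin.val hij
    simp only [Fin.coe_natAdd] at this
    exact Fin.ext (by omega)
  have hd : ∀ (i : Fin a) (j : Fin b), Fin.castAdd b i ≠ Fin.natAdd a j := by
    intro i j hij
    have := congrArg Fin.val hij
    simp only [Fin.coe_castAdd, Fin.coe_natAdd] at this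
    omega
  have hlist := congrArg FreeMonoid.toList h
  simp only [FreeMonoid.toList_mul, FreeMonoid.toList_map] at hlist
  have := list_append_map_inj h₁ h₂ hd (FreeMonoid.toList u) (FreeMonoid.toList w)
    (FreeMonoid.toList v) (FreeMonoid.toList w') hlist
  exact ⟨FreeMonoid.toList.injective this.1, FreeMonoid.toList.injective this.2⟩

/-- Coefficient of a concatenated word in a product of block-disjoint polynomials. -/
lemma concat_coeff {a b : ℕ} (p : MonoidAlgebra ℤ (FreeMonoid (Fin a)))
    (p' : MonoidAlgebra ℤ (FreeMonoid (Fin b))) (w : FreeMonoid (Fin a)) (w' : FreeMonoid (Fin b)) :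
    (MAmul (MonoidAlgebra.mapDomain (FreeMonoid.map (Fin.castAdd b)) p)
        (MonoidAlgebra.mapDomain (FreeMonoid.map (Fin.natAdd a)) p')).coeff
      (FreeMonoid.map (Fin.castAdd b) w * FreeMonoid.map (Fin.natAdd a) w')
      = p.coeff w * p'.coeff w' := by
  set F := FreeMonoid.map (Fin.castAdd (n := a) b)
  set G := FreeMonoid.map (Fin.natAdd (m := b) a)
  set W := F w * G w'
  rw [MAmul_eq, MonoidAlgebra.coeff_mul, MonoidAlgebra.coeff_mapDomain, MonoidAlgebra.coeff_mapDomain]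
  rw [Finsupp.sum_mapDomain_index
    (fun u => by simp [Finsupp.sum])
    (fun u c d => by
      rw [← Finsupp.sum_add]
      refine Finsupp.sum_congr fun v _ => ?_
      split_ifs <;> simp [add_mul])]
  have key : ∀ (u : FreeMonoid (Fin a)) (c : ℤ),
      (Finsupp.sum (Finsupp.mapDomain G p'.coeff) fun v d => if F u * v = W then c * d else 0)
      = if u = w then c * p'.coeff w' else 0 := by
    intro u c
    rw [Finsupp.sum_mapDomain_index (fun v => by simp) (fun v d₁ d₂ => by split_ifs <;> simp [mul_add])]
    have hpt : ∀ (v : FreeMonoid (Fin b)) (d : ℤ), (if F u * G v = W then c * d else 0)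
        = if v = w' ∧ u = w then c * d else 0 := by
      intro v d
      congr 1
      simp only [eq_iff_iff]
      constructor
      · intro h; have := block_factor_unique u w v w' h; exact ⟨this.2, this.1⟩
      · rintro ⟨rfl, rfl⟩; rfl
    rw [show (Finsupp.sum p'.coeff fun v d => if F u * G v = W then c * d else 0)
        = Finsupp.sum p'.coeff fun v d => if v = w' ∧ u = w then c * d else 0 from
      Finsupp.sum_congr (fun v _ => hpt v (p'.coeff v))]
    by_cases hu : u = w
    · simp only [hu, and_true]
      rw [Finsupp.sum_ite_eq' p'.coeff w' (fun v d => c * d), if_true]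
      split_ifs with h
      · rfl
      · rw [Finsupp.notMem_support_iff.mp h, mul_zero]
    · simp only [hu, and_false, if_false]
      simp [Finsupp.sum]
  rw [show (Finsupp.sum p.coeff fun u c => (Finsupp.mapDomain (⇑G) p'.coeff).sum
        fun v d => if F u * v = W then c * d else 0)
      = Finsupp.sum p.coeff fun u c => if u = w then c * p'.coeff w' else 0 from
    Finsupp.sum_congr (fun u _ => key u (p.coeff u))]
  rw [Finsupp.sum_ite_eq' p.coeff w (fun u c => c * p'.coeff w')]
  split_ifs with h
  · rfl
  · rw [Finsupp.notMem_support_iff.mp h, zero_mul]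



variable {R S : Type*} [Ring R] [Ring S]

/-- `Σᵢ ι(cᵢ) xⁱ` as an additive monoid hom. -/
def oreLift (ι : R →+* S) (x : S) : (ℕ →₀ R) →+ S :=
  Finsupp.liftAddHom fun i => (AddMonoidHom.mulRight (x ^ i)).comp ι.toAddMonoidHom

lemma oreLift_apply (ι : R →+* S) (x : S) (c : ℕ →₀ R) :
    oreLift ι x c = c.sum fun i a => ι a * x ^ i := rfl

lemma oreLift_single (ι : R →+* S) (x : S) (i : ℕ) (a : R) :
    oreLift ι x (Finsupp.single i a) = ι a * x ^ i := by
  rw [oreLift_apply, Finsupp.sum_single_index (by simp)]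

variable {σ : R →+* R} {ι : R →+* S} {x : S}

lemma ore_x_mul (hS : IsOreExtension σ (fun _ => 0) ι x) (a : R) :
    x * ι a = ι (σ a) * x := by
  have := hS.rel a
  simpa using this

lemma ore_xpow_mul (hS : IsOreExtension σ (fun _ => 0) ι x) (i : ℕ) (a : R) :
    x ^ i * ι a = ι ((⇑σ)^[i] a) * x ^ i := by
  induction i generalizing a with
  | zero => simp
  | succ i ih =>
    rw [pow_succ, mul_assoc, ore_x_mul hS, ← mul_assoc, ih (σ a), ← Function.iterate_succ_apply,
      mul_assoc, ← pow_succ]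

lemma ore_mono_mul (hS : IsOreExtension σ (fun _ => 0) ι x) (i j : ℕ) (a b : R) :
    (ι a * x ^ i) * (ι b * x ^ j) = ι (a * (⇑σ)^[i] b) * x ^ (i + j) := by
  rw [mul_assoc, ← mul_assoc (x ^ i), ore_xpow_mul hS, mul_assoc, ← pow_add, ← mul_assoc, ← map_mul]

lemma ore_lift_eq_zero (hS : IsOreExtension σ (fun _ => 0) ι x) {c : ℕ →₀ R}
    (h : oreLift ι x c = 0) : c = 0 := hS.unique c h

lemma ore_lift_inj (hS : IsOreExtension σ (fun _ => 0) ι x) {c d : ℕ →₀ R}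
    (h : oreLift ι x c = oreLift ι x d) : c = d := by
  have : oreLift ι x (c - d) = 0 := by rw [map_sub, h, sub_self]
  have := ore_lift_eq_zero hS this
  exact sub_eq_zero.mp (by rwa [← sub_eq_zero] at this ⊢)

lemma ore_repr' (hS : IsOreExtension σ (fun _ => 0) ι x) (s : S) :
    ∃ c : ℕ →₀ R, s = oreLift ι x c := hS.repr s

/-- Convolution of coefficient Finsupps. -/
def oreConv (σ : R →+* R) (c d : ℕ →₀ R) : ℕ →₀ R :=
  c.sum fun i a => d.sum fun j b => Finsupp.single (i + j) (a * (⇑σ)^[i] b)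

lemma oreConv_apply (σ : R →+* R) (c d : ℕ →₀ R) (ℓ : ℕ) :
    oreConv σ c d ℓ = c.sum fun i a => d.sum fun j b =>
      if i + j = ℓ then a * (⇑σ)^[i] b else 0 := by
  unfold oreConv
  rw [Finsupp.sum_apply]
  refine Finsupp.sum_congr fun i _ => ?_
  rw [Finsupp.sum_apply]
  exact Finsupp.sum_congr fun j _ => by rw [Finsupp.single_apply]

lemma ore_mul_eq (hS : IsOreExtension σ (fun _ => 0) ι x) (c d : ℕ →₀ R) :
    oreLift ι x c * oreLift ι x d = oreLift ι x (oreConv σ c d) := by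
  unfold oreConv
  rw [map_finsuppSum]
  rw [oreLift_apply ι x c, oreLift_apply ι x d, Finsupp.sum_mul]
  refine Finsupp.sum_congr fun i _ => ?_
  rw [map_finsuppSum, Finsupp.mul_sum]
  refine Finsupp.sum_congr fun j _ => ?_
  rw [oreLift_single, ore_mono_mul hS]

lemma sigma_iter_zero (σ : R →+* R) (k : ℕ) : (⇑σ)^[k] (0:R) = 0 :=
  Function.iterate_fixed (map_zero σ) k


variable {R R' : Type*} [Ring R] [Ring R']


lemma oreConv_zero_coeff (σ : R →+* R) (c d : ℕ →₀ R) :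
    oreConv σ c d 0 = c 0 * d 0 := by
  rw [oreConv_apply]
  have key : ∀ (i : ℕ) (a : R), (d.sum fun j b => if i + j = 0 then a * (⇑σ)^[i] b else 0)
      = if i = 0 then a * d 0 else 0 := by
    intro i a
    by_cases hi : i = 0
    · subst hi
      have : ∀ (j : ℕ) (b : R), (if 0 + j = 0 then a * (⇑σ)^[0] b else 0)
          = if j = 0 then a * b else 0 := by
        intro j b; simp [Nat.add_eq_zero]
      rw [show (d.sum fun j b => if 0 + j = 0 then a * (⇑σ)^[0] b else 0)
          = d.sum fun j b => if j = 0 then a * b else 0 from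
        Finsupp.sum_congr (fun j _ => this j (d j)), Finsupp.sum_ite_eq' d 0 fun j b => a * b,
        show (if (0:ℕ) = 0 then a * d 0 else 0) = a * d 0 from if_pos rfl]
      split_ifs with h
      · rfl
      · rw [Finsupp.notMem_support_iff.mp h, mul_zero]
    · rw [if_neg hi]
      apply Finset.sum_eq_zero
      intro j _
      dsimp only
      rw [if_neg (by omega)]
  rw [show (c.sum fun i a => d.sum fun j b => if i + j = 0 then a * (⇑σ)^[i] b else 0)
      = c.sum fun i a => if i = 0 then a * d 0 else 0 from
    Finsupp.sum_congr (fun i _ => key i (c i)), Finsupp.sum_ite_eq' c 0 fun i a => a * d 0]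
  split_ifs with h
  · rfl
  · rw [Finsupp.notMem_support_iff.mp h, zero_mul]

lemma mapRange_oreConv (σ : R →+* R) (σ' : R' →+* R') (π : R →+* R')
    (hcomm : ∀ (i : ℕ) (r : R), (⇑σ')^[i] (π r) = π ((⇑σ)^[i] r)) (c d : ℕ →₀ R) :
    Finsupp.mapRange ⇑π (map_zero π) (oreConv σ c d)
      = oreConv σ' (Finsupp.mapRange ⇑π (map_zero π) c) (Finsupp.mapRange ⇑π (map_zero π) d) := by
  ext ℓ
  rw [Finsupp.mapRange_apply, oreConv_apply, oreConv_apply]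
  rw [Finsupp.sum_mapRange_index (fun i => by simp [Finsupp.sum])]
  rw [show (π (c.sum fun i a => d.sum fun j b => if i + j = ℓ then a * (⇑σ)^[i] b else 0))
      = c.sum fun i a => π (d.sum fun j b => if i + j = ℓ then a * (⇑σ)^[i] b else 0) from
    map_finsuppSum π c _]
  refine Finsupp.sum_congr fun i _ => ?_
  rw [Finsupp.sum_mapRange_index (fun j => by simp)]
  rw [show (π (d.sum fun j b => if i + j = ℓ then (c i) * (⇑σ)^[i] b else 0))
      = d.sum fun j b => π (if i + j = ℓ then (c i) * (⇑σ)^[i] b else 0) from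
    map_finsuppSum π d _]
  refine Finsupp.sum_congr fun j _ => ?_
  split_ifs <;> simp [hcomm]

end AuxiliaryLemmas

/-- Let `R` be a PI ring, `σ` an endomorphism of `R` and `n ≥ 1`.  Let
`R' = R/ker(σⁿ)` (encoded by the quotient map `π` with kernel `ker σⁿ`) with induced
endomorphism `σ'`.  If the skew polynomial ring `R'[x;σ']` is PI, then `R[x;σ]` is PI. -/
theorem skewPolynomial_isPIRing_of_quotient_by_ker_pow
    {R R' S S' : Type*} [Ring R] [Ring R'] [Ring S] [Ring S']
    (hR : IsPIRing R)
    (σ : R →+* R) (n : ℕ) (hn : 1 ≤ n)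
    (π : R →+* R') (hπ : Function.Surjective π)
    (hkerπ : ∀ r : R, π r = 0 ↔ (⇑σ)^[n] r = 0)
    (σ' : R' →+* R') (hcomp : σ'.comp π = π.comp σ)
    (ι : R →+* S) (x : S) (hS : IsOreExtension σ (fun _ => 0) ι x)
    (ι' : R' →+* S') (y : S') (hS' : IsOreExtension σ' (fun _ => 0) ι' y)
    (hS'PI : IsPIRing S') :
    IsPIRing S := by
  classical
  by_cases h1 : (1:S) = 0
  · exact pi_of_trivial h1
  have h1R : (1:R) ≠ 0 := fun h => h1 (by rw [← map_one ι, h, map_zero])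
  have h1S' : (1:S') ≠ 0 := by
    intro h
    apply h1R
    have h1R' : (1:R') = 0 := hS'.inj (by rw [map_one, h, map_zero])
    have hπ1 : π (1:R) = 0 := by rw [map_one, h1R']
    have h2 := (hkerπ 1).mp hπ1
    rwa [Function.iterate_fixed (map_one σ) n] at h2
  obtain ⟨k, p, w, hpw, hp1, hpid⟩ := pi_normalize h1R hR
  obtain ⟨k', p', w', hp'w, hp'1, hp'id⟩ := pi_normalize h1S' hS'PI
  have hc : ∀ r : R, σ' (π r) = π (σ r) := fun r => RingHom.congr_fun hcomp r
  have hcomm : ∀ (i : ℕ) (r : R), (⇑σ')^[i] (π r) = π ((⇑σ)^[i] r) := by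
    intro i
    induction i with
    | zero => intro r; rfl
    | succ i ih =>
      intro r
      rw [Function.iterate_succ_apply, Function.iterate_succ_apply, hc, ih]
  -- canonical representation
  have hrep0 : ∀ s : S, ∃ c, s = oreLift ι x c := ore_repr' hS
  set rep : S → (ℕ →₀ R) := fun s => (hrep0 s).choose with hrepdef
  have hrep : ∀ s, s = oreLift ι x (rep s) := fun s => (hrep0 s).choose_spec
  have rep_eq : ∀ (s : S) (c : ℕ →₀ R), s = oreLift ι x c → rep s = c :=
    fun s c h => ore_lift_inj hS (by rw [← hrep s, ← h])
  -- the homomorphism to R × S'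
  set ψ : (ℕ →₀ R) → S' := fun c => oreLift ι' y (Finsupp.mapRange ⇑π (map_zero π) c) with hψdef
  have ψ_conv : ∀ c d : ℕ →₀ R, ψ (oreConv σ c d) = ψ c * ψ d := by
    intro c d
    rw [hψdef]
    dsimp only
    rw [mapRange_oreConv σ σ' π hcomm, ← ore_mul_eq hS']
  set Φ : S → R × S' := fun s => (rep s 0, ψ (rep s)) with hΦdef
  have Φ_add : ∀ s t : S, Φ (s + t) = Φ s + Φ t := by
    intro s t
    have h : rep (s + t) = rep s + rep t := rep_eq _ _ (by rw [map_add, ← hrep s, ← hrep t])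
    rw [hΦdef]
    dsimp only
    rw [h, Prod.mk_add_mk]
    refine congrArg₂ Prod.mk (Finsupp.add_apply _ _ _) ?_
    rw [hψdef]
    dsimp only
    rw [Finsupp.mapRange_add (map_add π), map_add]
  have Φ_mul : ∀ s t : S, Φ (s * t) = Φ s * Φ t := by
    intro s t
    have h : rep (s * t) = oreConv σ (rep s) (rep t) := by
      apply rep_eq
      conv_lhs => rw [hrep s, hrep t]
      exact ore_mul_eq hS _ _
    rw [hΦdef]
    dsimp only
    rw [h, Prod.mk_mul_mk]
    exact congrArg₂ Prod.mk (oreConv_zero_coeff σ _ _) (ψ_conv _ _)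
  have Φ_one : Φ 1 = 1 := by
    have h : rep 1 = Finsupp.single 0 1 :=
      rep_eq 1 _ (by rw [oreLift_single, map_one, pow_zero, mul_one])
    rw [hΦdef]
    dsimp only
    rw [h, hψdef]
    dsimp only
    rw [Finsupp.mapRange_single, oreLift_single]
    refine congrArg₂ Prod.mk (Finsupp.single_eq_same) ?_
    rw [map_one, map_one, pow_zero, mul_one]
  have Φ_zero : Φ 0 = 0 := by
    have h : rep 0 = 0 := rep_eq 0 0 (by rw [map_zero])
    rw [hΦdef]
    dsimp only
    rw [h, hψdef]
    dsimp only
    rw [Finsupp.mapRange_zero]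
    refine congrArg₂ Prod.mk rfl ?_
    rw [map_zero]
  set ΦR : S →+* R × S' :=
    { toFun := Φ, map_one' := Φ_one, map_mul' := Φ_mul, map_zero' := Φ_zero,
      map_add' := Φ_add } with hΦRdef
  have hΦRcoe : ∀ s : S, ΦR s = Φ s := fun s => rfl
  -- kernel description
  have hker : ∀ s : S, Φ s = 0 → rep s 0 = 0 ∧ ∀ i, (⇑σ)^[n] (rep s i) = 0 := by
    intro s hs
    have hfst : rep s 0 = 0 := congrArg Prod.fst hs
    have hsnd : ψ (rep s) = 0 := congrArg Prod.snd hs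
    have h3 : Finsupp.mapRange ⇑π (map_zero π) (rep s) = 0 := ore_lift_eq_zero hS' hsnd
    refine ⟨hfst, fun i => ?_⟩
    have h4 : π (rep s i) = 0 := by
      have := DFunLike.congr_fun h3 i
      simpa [Finsupp.mapRange_apply] using this
    exact (hkerπ _).mp h4
  -- the common identity q0 of R × S'
  have hq0w : (MAmul (MonoidAlgebra.mapDomain ⇑(FreeMonoid.map (Fin.castAdd k')) p)
      (MonoidAlgebra.mapDomain ⇑(FreeMonoid.map (Fin.natAdd k)) p')).coeff
      (FreeMonoid.map (Fin.castAdd k') w * FreeMonoid.map (Fin.natAdd k) w') = 1 := by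
    rw [concat_coeff p p' w w', hpw, hp'w, mul_one]
  set q0 := MAmul (MonoidAlgebra.mapDomain ⇑(FreeMonoid.map (Fin.castAdd k')) p)
      (MonoidAlgebra.mapDomain ⇑(FreeMonoid.map (Fin.natAdd k)) p') with hq0def
  have hq01 : q0.coeff 1 = 0 := by
    have h := concat_coeff p p' 1 1
    rw [map_one, map_one, mul_one] at h
    rw [hq0def, h, hp1, zero_mul]
  have hq0id : ∀ g : Fin (k + k') → (R × S'), evalA q0 g = 0 := by
    intro g
    have h : evalA q0 g = evalA p (g ∘ Fin.castAdd k') * evalA p' (g ∘ Fin.natAdd k) := by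
      rw [hq0def, MAmul_eq, evalA_mul, evalA_mapDomain, evalA_mapDomain]
    rw [h]
    have h1' : (evalA p (g ∘ Fin.castAdd k')).1 = 0 := by
      have := evalA_hom (RingHom.fst R S') p (g ∘ Fin.castAdd k')
      rw [show ⇑(RingHom.fst R S') = Prod.fst from rfl] at this
      rw [show (evalA p (g ∘ Fin.castAdd k')).1
          = Prod.fst (evalA p (g ∘ Fin.castAdd k')) from rfl, this, hpid]
    have h2' : (evalA p' (g ∘ Fin.natAdd k)).2 = 0 := by
      have := evalA_hom (RingHom.snd R S') p' (g ∘ Fin.natAdd k)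
      rw [show ⇑(RingHom.snd R S') = Prod.snd from rfl] at this
      rw [show (evalA p' (g ∘ Fin.natAdd k)).2
          = Prod.snd (evalA p' (g ∘ Fin.natAdd k)) from rfl, this, hp'id]
    have : (evalA p (g ∘ Fin.castAdd k') * evalA p' (g ∘ Fin.natAdd k)).1 = 0 := by
      rw [Prod.fst_mul, h1', zero_mul]
    have h2'' : (evalA p (g ∘ Fin.castAdd k') * evalA p' (g ∘ Fin.natAdd k)).2 = 0 := by
      rw [Prod.snd_mul, h2', mul_zero]
    exact Prod.ext this h2''
  -- evaluations of q0 in S land in the ideal J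
  have hq0J : ∀ f : Fin (k + k') → S,
      rep (evalA q0 f) 0 = 0 ∧ ∀ i, (⇑σ)^[n] (rep (evalA q0 f) i) = 0 := by
    intro f
    apply hker
    have h := evalA_hom ΦR q0 f
    rw [hΦRcoe] at h
    rw [h]
    have : (⇑ΦR ∘ f) = (Φ ∘ f) := rfl
    rw [this, hq0id]
  -- the main induction
  have main : ∀ m : ℕ, 1 ≤ m → ∃ (K : ℕ) (q : MonoidAlgebra ℤ (FreeMonoid (Fin K)))
      (wq : FreeMonoid (Fin K)), q.coeff wq = 1 ∧ q.coeff 1 = 0 ∧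
      ∀ f : Fin K → S, ∃ c : ℕ →₀ R, evalA q f = oreLift ι x c ∧ ∀ i ∈ c.support, m ≤ i := by
    intro m hm
    induction m, hm using Nat.le_induction with
    | base =>
      refine ⟨k + k', q0, FreeMonoid.map (Fin.castAdd k') w * FreeMonoid.map (Fin.natAdd k) w',
        hq0w, hq01, fun f => ?_⟩
      refine ⟨rep (evalA q0 f), hrep _, fun i hi => ?_⟩
      obtain ⟨hz, -⟩ := hq0J f
      by_contra hlt
      push_neg at hlt
      have hi0 : i = 0 := by omega
      rw [hi0] at hi
      exact Finsupp.mem_support_iff.mp hi hz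
    | succ m hm ih =>
      obtain ⟨K, q, wq, hqw, hq1, hqmem⟩ := ih
      refine ⟨K + (k + k'),
        MAmul (MonoidAlgebra.mapDomain ⇑(FreeMonoid.map (Fin.castAdd (k + k'))) q)
              (MonoidAlgebra.mapDomain ⇑(FreeMonoid.map (Fin.natAdd K)) q0),
        FreeMonoid.map (Fin.castAdd (k + k')) wq * FreeMonoid.map (Fin.natAdd K)
          (FreeMonoid.map (Fin.castAdd k') w * FreeMonoid.map (Fin.natAdd k) w'),
        ?_, ?_, ?_⟩
      · rw [concat_coeff q q0 wq _, hqw, hq0w, mul_one]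
      · have h := concat_coeff q q0 1 1
        rw [map_one, map_one, mul_one] at h
        rw [h, hq1, zero_mul]
      · intro f
        obtain ⟨c, hcval, hcs⟩ := hqmem (f ∘ Fin.castAdd (k + k'))
        obtain ⟨hd0, hdI⟩ := hq0J (f ∘ Fin.natAdd K)
        have heval : evalA (MAmul
            (MonoidAlgebra.mapDomain ⇑(FreeMonoid.map (Fin.castAdd (k + k'))) q)
            (MonoidAlgebra.mapDomain ⇑(FreeMonoid.map (Fin.natAdd K)) q0)) f
            = oreLift ι x c * oreLift ι x (rep (evalA q0 (f ∘ Fin.natAdd K))) := by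
          rw [MAmul_eq, evalA_mul, evalA_mapDomain, evalA_mapDomain, ← hcval,
            ← hrep (evalA q0 (f ∘ Fin.natAdd K))]
        set d := rep (evalA q0 (f ∘ Fin.natAdd K)) with hddef
        refine ⟨oreConv σ c d, by rw [heval, ore_mul_eq hS], fun ℓ hℓ => ?_⟩
        by_contra hlt
        push_neg at hlt
        apply Finsupp.mem_support_iff.mp hℓ
        rw [oreConv_apply]
        apply Finset.sum_eq_zero
        intro i hi
        dsimp only
        apply Finset.sum_eq_zero
        intro j hj
        dsimp only
        have him : m ≤ i := hcs i hi
        have hj1 : j ≠ 0 := by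
          intro hj0
          rw [hj0] at hj
          exact Finsupp.mem_support_iff.mp hj hd0
        rw [if_neg (by omega)]
  -- conclusion
  obtain ⟨K, q, wq, hqw, hq1, hqmem⟩ := main n hn
  refine ⟨K + (k + k'),
    MAmul (MonoidAlgebra.mapDomain ⇑(FreeMonoid.map (Fin.castAdd (k + k'))) q)
          (MonoidAlgebra.mapDomain ⇑(FreeMonoid.map (Fin.natAdd K)) q0),
    FreeMonoid.map (Fin.castAdd (k + k')) wq * FreeMonoid.map (Fin.natAdd K)
      (FreeMonoid.map (Fin.castAdd k') w * FreeMonoid.map (Fin.natAdd k) w'),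
    ?_, ?_⟩
  · rw [concat_coeff q q0 wq _, hqw, hq0w, mul_one]
  · intro f
    show evalA _ f = 0
    obtain ⟨c, hcval, hcs⟩ := hqmem (f ∘ Fin.castAdd (k + k'))
    obtain ⟨hd0, hdI⟩ := hq0J (f ∘ Fin.natAdd K)
    have heval : evalA (MAmul
        (MonoidAlgebra.mapDomain ⇑(FreeMonoid.map (Fin.castAdd (k + k'))) q)
        (MonoidAlgebra.mapDomain ⇑(FreeMonoid.map (Fin.natAdd K)) q0)) f
        = oreLift ι x c * oreLift ι x (rep (evalA q0 (f ∘ Fin.natAdd K))) := by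
      rw [MAmul_eq, evalA_mul, evalA_mapDomain, evalA_mapDomain, ← hcval,
        ← hrep (evalA q0 (f ∘ Fin.natAdd K))]
    set d := rep (evalA q0 (f ∘ Fin.natAdd K)) with hddef
    rw [heval, ore_mul_eq hS]
    have hconv : oreConv σ c d = 0 := by
      ext ℓ
      rw [oreConv_apply, Finsupp.coe_zero, Pi.zero_apply]
      apply Finset.sum_eq_zero
      intro i hi
      dsimp only
      apply Finset.sum_eq_zero
      intro j hj
      dsimp only
      have hin : n ≤ i := hcs i hi
      have hσ0 : (⇑σ)^[i] (d j) = 0 := by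
        rw [show i = (i - n) + n by omega, Function.iterate_add_apply, hdI j, sigma_iter_zero]
      rw [hσ0, mul_zero, ite_self]
    rw [hconv, map_zero]
end
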